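/- arXiv:1506.05275 — 13 statements merged into one kernel-verified Lean document; each statement's English description precedes it below -/
import Mathlib

section
/- If for all c in C the sign of G(X,c,β) equals the sign of E(H(Y,c)|X) almost surely, and for every b in Γ and c in C the event G(X,c,b)=0 has probability zero, then the set Θ₀ of parameters b satisfying the same three sign equivalences (positive, zero, negative) almost surely equals the set Θ of parameters b such that G(X,c,b)·E(H(Y,c)|X) ≥ 0 almost surely for all c in C. -/
open MeasureTheory ProbabilityTheory

/-- Conditional expectation of `f` given the σ-algebra generated by the random element `X`. -/
noncomputable def condExpGiven {Ω 𝓧 : Type*} [MeasurableSpace Ω] [MeasurableSpace 𝓧]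
    (μ : Measure Ω) (X : Ω → 𝓧) (f : Ω → ℝ) : Ω → ℝ :=
  μ[f | MeasurableSpace.comap X inferInstance]

/-- Under the sign restriction for `β` and the continuity assumption,
the set `Θ₀` defined by the three sign equivalences equals the set `Θ` defined by the
weak product inequality. -/
theorem theta0_eq_theta {Ω 𝓧 𝓨 P C' : Type*}
    [MeasurableSpace Ω] [MeasurableSpace 𝓧] [MeasurableSpace 𝓨]
    (μ : Measure Ω) [IsProbabilityMeasure μ]
    (X : Ω → 𝓧) (Y : Ω → 𝓨) (hX : Measurable X) (hY : Measurable Y)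
    (Γ : Set P) (C : Set C') (β : P) (hβ : β ∈ Γ)
    (G : 𝓧 → C' → P → ℝ) (H : 𝓨 → C' → ℝ)
    (hG : ∀ c b, Measurable fun x => G x c b)
    (hH : ∀ c, Measurable fun y => H y c)
    (hHint : ∀ c, Integrable (fun ω => H (Y ω) c) μ)
    -- Assumption 1 (sign restriction) for the true parameter β
    (hsign : ∀ c ∈ C, ∀ᵐ ω ∂μ,
      (G (X ω) c β > 0 ↔ condExpGiven μ X (fun ω' => H (Y ω') c) ω > 0) ∧
      (G (X ω) c β = 0 ↔ condExpGiven μ X (fun ω' => H (Y ω') c) ω = 0) ∧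
      (G (X ω) c β < 0 ↔ condExpGiven μ X (fun ω' => H (Y ω') c) ω < 0))
    -- Assumption 2 (continuity)
    (hcont : ∀ b ∈ Γ, ∀ c ∈ C, μ {ω | G (X ω) c b = 0} = 0) :
    {b ∈ Γ | ∀ c ∈ C, ∀ᵐ ω ∂μ,
      (G (X ω) c b > 0 ↔ condExpGiven μ X (fun ω' => H (Y ω') c) ω > 0) ∧
      (G (X ω) c b = 0 ↔ condExpGiven μ X (fun ω' => H (Y ω') c) ω = 0) ∧
      (G (X ω) c b < 0 ↔ condExpGiven μ X (fun ω' => H (Y ω') c) ω < 0)} =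
    {b ∈ Γ | ∀ c ∈ C, ∀ᵐ ω ∂μ,
      G (X ω) c b * condExpGiven μ X (fun ω' => H (Y ω') c) ω ≥ 0} := by
  ext b
  simp only [Set.mem_setOf_eq]
  constructor
  · rintro ⟨hbΓ, h⟩
    refine ⟨hbΓ, fun c hc => ?_⟩
    filter_upwards [h c hc] with ω ⟨h1, h2, h3⟩
    rcases lt_trichotomy (G (X ω) c b) 0 with hlt | heq | hgt
    · have := h3.mp hlt; nlinarith
    · simp [heq]
    · have := h1.mp hgt; nlinarith
  · rintro ⟨hbΓ, h⟩
    refine ⟨hbΓ, fun c hc => ?_⟩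
    have hb0 : ∀ᵐ ω ∂μ, G (X ω) c b ≠ 0 :=
      (ae_iff.mpr (by simpa using hcont b hbΓ c hc))
    have hβ0 : ∀ᵐ ω ∂μ, G (X ω) c β ≠ 0 :=
      (ae_iff.mpr (by simpa using hcont β hβ c hc))
    filter_upwards [h c hc, hb0, hβ0, hsign c hc] with ω hprod hb0 hβ0 hs
    have hce : condExpGiven μ X (fun ω' => H (Y ω') c) ω ≠ 0 := fun h0 => hβ0 (hs.2.1.mpr h0)
    rcases lt_trichotomy (G (X ω) c b) 0 with hlt | heq | hgt
    · have hceneg : condExpGiven μ X (fun ω' => H (Y ω') c) ω < 0 := by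
        rcases hce.lt_or_gt with h' | h'
        · exact h'
        · nlinarith
      constructor
      · constructor <;> intro hh <;> linarith
      refine ⟨?_, ?_⟩
      · constructor <;> intro hh <;> [linarith; exact absurd hh hce]
      · constructor <;> intro hh <;> [exact hceneg; exact hlt]
    · exact absurd heq hb0
    · have hcepos : 0 < condExpGiven μ X (fun ω' => H (Y ω') c) ω := by
        rcases hce.lt_or_gt with h' | h'
        · nlinarith
        · exact h'
      refine ⟨⟨fun _ => hcepos, fun _ => hgt⟩, ?_, ?_⟩
      · constructor <;> intro hh <;> [linarith; exact absurd hh hce]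
      · constructor <;> intro hh <;> linarith
end

section
/- Under the sign restriction and continuity assumptions, the set Θ = {b ∈ Γ : G(X,c,b)·E(H(Y,c)|X) ≥ 0 a.s. for all c ∈ C} equals the set Θ̃ = {b ∈ Γ : G(X,c,b)·E(H(Y,c) | G(X,c,b), G(X,c,γ)) ≥ 0 a.s. for all (γ,c) ∈ Γ × C}, where the inner conditional expectation is conditional on the two indexing variables G(X,c,b) and G(X,c,γ). -/
/-!
Both inclusions rest on the tower property `E[E[H | X] | Z] = E[H | Z]` for `Z = (G_b, G_γ)`, a
function of `X`, and on pulling the bounded `Z`-measurable factor `sign G_b` out of conditional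
expectations given `Z` (multiplying by `sign G_b` rather than by `G_b` keeps everything integrable).
If `G_b` agrees in sign with `h = E[H | X]`, then `sign G_b * h ≥ 0`, hence
`sign G_b * E[h | Z] = E[sign G_b * h | Z] ≥ 0`. Conversely take `γ = β`, so that `h` has the sign
of `G_β`. On the `Z`-measurable event `{G_b * G_β < 0}` the function `sign G_b * h` is `≤ 0`, while
its conditional expectation given `Z` is `≥ 0`; having the same integral, they agree, so both
vanish there. Off that event `G_b * h ≥ 0` because `h` has the sign of `G_β`.
-/

open MeasureTheory ProbabilityTheory

namespace Real

lemma measurable_sign : Measurable Real.sign :=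
  measurable_const.ite measurableSet_Iio (measurable_const.ite measurableSet_Ioi measurable_const)

lemma abs_sign_le_one (r : ℝ) : |sign r| ≤ 1 := by
  rcases sign_apply_eq r with h | h | h <;> simp [h]

lemma sign_mul_nonneg_iff {a b : ℝ} : 0 ≤ sign a * b ↔ 0 ≤ a * b := by
  rcases lt_trichotomy a 0 with ha | rfl | ha
  · rw [sign_of_neg ha]
    constructor <;> intro <;> nlinarith
  · simp
  · rw [sign_of_pos ha]
    constructor <;> intro <;> nlinarith

lemma sign_mul_nonpos_iff {a b : ℝ} : sign a * b ≤ 0 ↔ a * b ≤ 0 := by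
  simpa only [mul_neg, neg_nonneg] using sign_mul_nonneg_iff (a := a) (b := -b)

lemma sign_mul_eq_zero_iff {a b : ℝ} : sign a * b = 0 ↔ a * b = 0 := by
  simp [sign_eq_zero_iff]

lemma mul_nonneg_iff_of_sign_eq {a b c : ℝ} (h : sign a = sign b) : 0 ≤ c * a ↔ 0 ≤ c * b := by
  rw [mul_comm c a, mul_comm c b, ← sign_mul_nonneg_iff, h, sign_mul_nonneg_iff]

end Real

section CondExp

variable {Ω : Type*} {m m0 : MeasurableSpace Ω} {μ : Measure Ω} [IsFiniteMeasure μ] {g h : Ω → ℝ}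

lemma condExp_sign_mul (hm : m ≤ m0) (hg : StronglyMeasurable[m] g) (hh : Integrable h μ) :
    μ[(fun ω => Real.sign (g ω)) * h | m] =ᵐ[μ] (fun ω => Real.sign (g ω)) * μ[h | m] :=
  condExp_stronglyMeasurable_mul_of_bound hm
    (Real.measurable_sign.comp hg.measurable).stronglyMeasurable hh 1
    (Filter.Eventually.of_forall fun ω => Real.abs_sign_le_one (g ω))

lemma ae_mul_condExp_nonneg (hm : m ≤ m0) (hg : StronglyMeasurable[m] g) (hh : Integrable h μ)
    (hgh : ∀ᵐ ω ∂μ, 0 ≤ g ω * h ω) : ∀ᵐ ω ∂μ, 0 ≤ g ω * μ[h | m] ω := by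
  have hsign : 0 ≤ᵐ[μ] μ[(fun ω => Real.sign (g ω)) * h | m] :=
    condExp_nonneg (hgh.mono fun ω hω => Real.sign_mul_nonneg_iff.mpr hω)
  filter_upwards [hsign, condExp_sign_mul hm hg hh] with ω hω heq
  rw [heq] at hω
  exact Real.sign_mul_nonneg_iff.mp hω

lemma ae_eq_condExp_of_ae_le_condExp (hm : m ≤ m0) {f : Ω → ℝ} (hf : Integrable f μ)
    (hle : f ≤ᵐ[μ] μ[f | m]) : f =ᵐ[μ] μ[f | m] :=
  (integral_eq_iff_of_ae_le hf integrable_condExp hle).mp (integral_condExp hm).symm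

lemma ae_mul_eq_zero_of_mul_condExp_nonneg (hm : m ≤ m0) (hg : StronglyMeasurable[m] g)
    (hh : Integrable h μ) (hgh : ∀ᵐ ω ∂μ, g ω * h ω ≤ 0)
    (hcond : ∀ᵐ ω ∂μ, 0 ≤ g ω * μ[h | m] ω) : ∀ᵐ ω ∂μ, g ω * h ω = 0 := by
  set k : Ω → ℝ := (fun ω => Real.sign (g ω)) * h
  have hk : Integrable k μ := hh.bdd_mul
    (Real.measurable_sign.comp (hg.measurable.mono hm le_rfl)).aestronglyMeasurable
    (Filter.Eventually.of_forall fun ω => Real.abs_sign_le_one (g ω))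
  have hk_nonpos : ∀ᵐ ω ∂μ, k ω ≤ 0 := hgh.mono fun ω hω => Real.sign_mul_nonpos_iff.mpr hω
  have hk_cond : ∀ᵐ ω ∂μ, 0 ≤ μ[k | m] ω := by
    filter_upwards [hcond, condExp_sign_mul hm hg hh] with ω hω heq
    rw [heq]
    exact Real.sign_mul_nonneg_iff.mpr hω
  have hk_eq : k =ᵐ[μ] μ[k | m] := ae_eq_condExp_of_ae_le_condExp hm hk <| by
    filter_upwards [hk_nonpos, hk_cond] with ω h₁ h₂ using h₁.trans h₂
  filter_upwards [hk_nonpos, hk_cond, hk_eq] with ω h₁ h₂ h₃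
  exact Real.sign_mul_eq_zero_iff.mp (le_antisymm h₁ (h₂.trans_eq h₃.symm))

end CondExp

section CondExpGiven

variable {Ω 𝓧 : Type*} [MeasurableSpace Ω] [MeasurableSpace 𝓧] {μ : Measure Ω} [IsFiniteMeasure μ]
  {X : Ω → 𝓧}

lemma condExpGiven_comp_condExpGiven {𝓩 : Type*} [MeasurableSpace 𝓩] (hX : Measurable X)
    {φ : 𝓧 → 𝓩} (hφ : Measurable φ) (f : Ω → ℝ) :
    condExpGiven μ (φ ∘ X) (condExpGiven μ X f) =ᵐ[μ] condExpGiven μ (φ ∘ X) f :=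
  condExp_condExp_of_le (MeasurableSpace.comap_le_comap_of_eq_comp φ hφ rfl) hX.comap_le

variable {U V : 𝓧 → ℝ} {f : Ω → ℝ}

lemma ae_mul_condExpGiven_pair_nonneg (hX : Measurable X) (hU : Measurable U) (hV : Measurable V)
    (hUf : ∀ᵐ ω ∂μ, 0 ≤ U (X ω) * condExpGiven μ X f ω) :
    ∀ᵐ ω ∂μ, 0 ≤ U (X ω) * condExpGiven μ (fun ω => (U (X ω), V (X ω))) f ω := by
  have hUZ : Measurable[MeasurableSpace.comap (fun ω => (U (X ω), V (X ω))) inferInstance]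
      fun ω => U (X ω) :=
    measurable_fst.comp (comap_measurable _)
  filter_upwards [ae_mul_condExp_nonneg ((hU.prodMk hV).comp hX).comap_le hUZ.stronglyMeasurable
      integrable_condExp hUf, condExpGiven_comp_condExpGiven hX (hU.prodMk hV) f] with ω hω htower
  exact htower ▸ hω

lemma ae_mul_condExpGiven_nonneg_of_pair (hX : Measurable X) (hU : Measurable U)
    (hV : Measurable V)
    (hsign : ∀ᵐ ω ∂μ, Real.sign (V (X ω)) = Real.sign (condExpGiven μ X f ω))
    (hpair : ∀ᵐ ω ∂μ, 0 ≤ U (X ω) * condExpGiven μ (fun ω => (U (X ω), V (X ω))) f ω) :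
    ∀ᵐ ω ∂μ, 0 ≤ U (X ω) * condExpGiven μ X f ω := by
  set Z : Ω → ℝ × ℝ := fun ω => (U (X ω), V (X ω))
  set A : Set Ω := {ω | U (X ω) * V (X ω) < 0}
  have hUZ : Measurable[MeasurableSpace.comap Z inferInstance] fun ω => U (X ω) :=
    measurable_fst.comp (comap_measurable Z)
  have hVZ : Measurable[MeasurableSpace.comap Z inferInstance] fun ω => V (X ω) :=
    measurable_snd.comp (comap_measurable Z)
  have hA : MeasurableSet[MeasurableSpace.comap Z inferInstance] A :=
    measurableSet_lt (hUZ.mul hVZ) measurable_const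
  have hnonpos : ∀ᵐ ω ∂μ, A.indicator (fun ω => U (X ω)) ω * condExpGiven μ X f ω ≤ 0 := by
    filter_upwards [hsign] with ω hω
    by_cases hωA : ω ∈ A
    · rw [Set.indicator_of_mem hωA]
      exact (not_le.mp ((Real.mul_nonneg_iff_of_sign_eq hω).not.mp (not_le.mpr hωA))).le
    · rw [Set.indicator_of_notMem hωA, zero_mul]
  have hcond : ∀ᵐ ω ∂μ, 0 ≤ A.indicator (fun ω => U (X ω)) ω *
      condExpGiven μ Z (condExpGiven μ X f) ω := by
    filter_upwards [hpair, condExpGiven_comp_condExpGiven hX (hU.prodMk hV) f] with ω hω htower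
    rw [← Set.indicator_mul_left]
    exact Set.indicator_apply_nonneg fun _ => htower ▸ hω
  filter_upwards [hsign, ae_mul_eq_zero_of_mul_condExp_nonneg ((hU.prodMk hV).comp hX).comap_le
      (hUZ.indicator hA).stronglyMeasurable integrable_condExp hnonpos hcond] with ω hω hzero
  by_cases hωA : ω ∈ A
  · rw [Set.indicator_of_mem hωA] at hzero
    exact hzero.ge
  · exact (Real.mul_nonneg_iff_of_sign_eq hω).mp (not_lt.mp hωA)

end CondExpGiven

theorem theta_eq_theta_tilde_general {Ω 𝓧 𝓨 P C' : Type*}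
    [MeasurableSpace Ω] [MeasurableSpace 𝓧] [MeasurableSpace 𝓨]
    (μ : Measure Ω) [IsProbabilityMeasure μ]
    (X : Ω → 𝓧) (Y : Ω → 𝓨) (hX : Measurable X)
    (Γ : Set P) (C : Set C') (β : P) (hβ : β ∈ Γ)
    (G : 𝓧 → C' → P → ℝ) (H : 𝓨 → C' → ℝ)
    (hG : ∀ c b, Measurable fun x => G x c b)
    -- Assumption 1 (sign restriction) for the true parameter β
    (hsign : ∀ c ∈ C, ∀ᵐ ω ∂μ,
      Real.sign (G (X ω) c β) =
        Real.sign (condExpGiven μ X (fun ω' => H (Y ω') c) ω)) :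
    {b ∈ Γ | ∀ c ∈ C, ∀ᵐ ω ∂μ,
      G (X ω) c b * condExpGiven μ X (fun ω' => H (Y ω') c) ω ≥ 0} =
    {b ∈ Γ | ∀ γ ∈ Γ, ∀ c ∈ C, ∀ᵐ ω ∂μ,
      G (X ω) c b *
        condExpGiven μ (fun ω' => (G (X ω') c b, G (X ω') c γ))
          (fun ω' => H (Y ω') c) ω ≥ 0} := by
  ext b
  constructor
  · rintro ⟨hb, hΘ⟩
    exact ⟨hb, fun γ _ c hc => ae_mul_condExpGiven_pair_nonneg hX (hG c b) (hG c γ) (hΘ c hc)⟩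
  · rintro ⟨hb, hΘ⟩
    exact ⟨hb, fun c hc =>
      ae_mul_condExpGiven_nonneg_of_pair hX (hG c b) (hG c β) (hsign c hc) (hΘ β hβ c hc)⟩

/-- Under the sign restriction and continuity assumptions, the identified set
`Θ` (conditioning on the full covariate vector `X`) equals the dimension-reduced set `Θ̃`
(conditioning on the two indexing variables `G(X,c,b)` and `G(X,c,γ)`). -/
theorem theta_eq_theta_tilde {Ω 𝓧 𝓨 P C' : Type*}
    [MeasurableSpace Ω] [MeasurableSpace 𝓧] [MeasurableSpace 𝓨]
    (μ : Measure Ω) [IsProbabilityMeasure μ]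
    (X : Ω → 𝓧) (Y : Ω → 𝓨) (hX : Measurable X) (hY : Measurable Y)
    (Γ : Set P) (C : Set C') (β : P) (hβ : β ∈ Γ)
    (G : 𝓧 → C' → P → ℝ) (H : 𝓨 → C' → ℝ)
    (hG : ∀ c b, Measurable fun x => G x c b)
    (hH : ∀ c, Measurable fun y => H y c)
    (hHint : ∀ c, Integrable (fun ω => H (Y ω) c) μ)
    -- Assumption 1 (sign restriction) for the true parameter β
    (hsign : ∀ c ∈ C, ∀ᵐ ω ∂μ,
      Real.sign (G (X ω) c β) =
        Real.sign (condExpGiven μ X (fun ω' => H (Y ω') c) ω))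
    -- Assumption 2 (continuity)
    (hcont : ∀ b ∈ Γ, ∀ c ∈ C, μ {ω | G (X ω) c b = 0} = 0) :
    {b ∈ Γ | ∀ c ∈ C, ∀ᵐ ω ∂μ,
      G (X ω) c b * condExpGiven μ X (fun ω' => H (Y ω') c) ω ≥ 0} =
    {b ∈ Γ | ∀ γ ∈ Γ, ∀ c ∈ C, ∀ᵐ ω ∂μ,
      G (X ω) c b *
        condExpGiven μ (fun ω' => (G (X ω') c b, G (X ω') c γ))
          (fun ω' => H (Y ω') c) ω ≥ 0} :=
  theta_eq_theta_tilde_general μ X Y hX Γ C β hβ G H hG hsign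
end

section
/- If b ∈ Θ̃, i.e. G(X,c,b)·E(H(Y,c)|G(X,c,b),G(X,c,γ)) ≥ 0 almost surely for all (γ,c) ∈ Γ × C, then b ∈ Θ, i.e. G(X,c,b)·E(H(Y,c)|X) ≥ 0 almost surely for all c ∈ C. (One direction of the dimension-reducing characterization: taking γ = β and using the sign restriction for β.) -/
open MeasureTheory ProbabilityTheory

/-!
Take `γ = β` in the definition of `Θ̃` and condition on `m = σ(G(X,c,b), G(X,c,β)) ≤ σ(X)`.
On the `m`-measurable set where `G(X,c,b) > 0 > G(X,c,β)`, the sign restriction makes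
`E(H|X) < 0`, while `b ∈ Θ̃` makes `E(H|m) ≥ 0`; both integrate to `∫ H` over that set, so it is
null, and likewise with the signs reversed. Hence `G(X,c,b)·G(X,c,β) ≥ 0` a.s., and
`G(X,c,β)` has the sign of `E(H|X)`.
-/

namespace Real

theorem sign_eq_neg_one_iff {r : ℝ} : sign r = -1 ↔ r < 0 := by
  refine ⟨fun h => ?_, sign_of_neg⟩
  rcases lt_trichotomy r 0 with hr | rfl | hr
  · exact hr
  · norm_num [sign_zero] at h
  · norm_num [sign_of_pos hr] at h

theorem neg_iff_neg_of_sign_eq {x y : ℝ} (h : sign x = sign y) : x < 0 ↔ y < 0 := by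
  rw [← sign_eq_neg_one_iff, h, sign_eq_neg_one_iff]

theorem pos_iff_pos_of_sign_eq {x y : ℝ} (h : sign x = sign y) : 0 < x ↔ 0 < y := by
  have h' : sign (-x) = sign (-y) := by rw [sign_neg, sign_neg, h]
  simpa using neg_iff_neg_of_sign_eq h'

theorem mul_nonneg_of_mul_nonneg_of_sign_eq {a x y : ℝ} (hax : 0 ≤ a * x)
    (h : sign x = sign y) : 0 ≤ a * y := by
  rcases mul_nonneg_iff.mp hax with ⟨ha, hx⟩ | ⟨ha, hx⟩
  · exact mul_nonneg ha (not_lt.mp <| (neg_iff_neg_of_sign_eq h).not.mp hx.not_gt)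
  · exact mul_nonneg_of_nonpos_of_nonpos ha
      (not_lt.mp <| (pos_iff_pos_of_sign_eq h).not.mp hx.not_gt)

end Real

namespace MeasureTheory

variable {Ω : Type*} {m m' m0 : MeasurableSpace Ω} {μ : Measure Ω} {f g : Ω → ℝ} {S : Set Ω}

theorem measure_eq_zero_of_neg_of_setIntegral_nonneg (hg : IntegrableOn g S μ)
    (hneg : ∀ᵐ x ∂μ.restrict S, g x < 0) (hint : 0 ≤ ∫ x in S, g x ∂μ) : μ S = 0 := by
  have hzero : (fun x => -g x) =ᵐ[μ.restrict S] 0 := by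
    refine (setIntegral_eq_zero_iff_of_nonneg_ae (hneg.mono fun _ hx => ?_) hg.neg).mp ?_
    · simpa using hx.le
    · change ∫ x in S, -g x ∂μ = 0
      rw [integral_neg, neg_eq_zero]
      exact le_antisymm (setIntegral_nonpos_of_ae_restrict (hneg.mono fun _ hx => hx.le)) hint
  have hfalse : ∀ᵐ x ∂μ.restrict S, False := by
    filter_upwards [hzero, hneg] with x h0 hx
    simp only [Pi.zero_apply, neg_eq_zero] at h0
    exact hx.ne h0
  exact Measure.restrict_eq_zero.mp (ae_eq_bot.mp (Filter.eventually_false_iff_eq_bot.mp hfalse))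

theorem measure_eq_zero_of_condExp_neg_of_condExp_nonneg [IsFiniteMeasure μ] (hm : m ≤ m')
    (hm' : m' ≤ m0) (hf : Integrable f μ) (hS : MeasurableSet[m] S)
    (hneg : ∀ᵐ x ∂μ, x ∈ S → μ[f|m'] x < 0) (hnonneg : ∀ᵐ x ∂μ, x ∈ S → 0 ≤ μ[f|m] x) :
    μ S = 0 := by
  have hS0 : MeasurableSet S := hm' _ (hm _ hS)
  refine measure_eq_zero_of_neg_of_setIntegral_nonneg integrable_condExp.integrableOn
    ((ae_restrict_iff' hS0).mpr hneg) ?_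
  calc 0 ≤ ∫ x in S, (μ[f|m]) x ∂μ :=
        setIntegral_nonneg_of_ae_restrict ((ae_restrict_iff' hS0).mpr hnonneg)
    _ = ∫ x in S, f x ∂μ := setIntegral_condExp (hm.trans hm') hf hS
    _ = ∫ x in S, (μ[f|m']) x ∂μ := (setIntegral_condExp hm' hf (hm _ hS)).symm

theorem measure_eq_zero_of_condExp_pos_of_condExp_nonpos [IsFiniteMeasure μ] (hm : m ≤ m')
    (hm' : m' ≤ m0) (hf : Integrable f μ) (hS : MeasurableSet[m] S)
    (hpos : ∀ᵐ x ∂μ, x ∈ S → 0 < μ[f|m'] x) (hnonpos : ∀ᵐ x ∂μ, x ∈ S → μ[f|m] x ≤ 0) :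
    μ S = 0 := by
  refine measure_eq_zero_of_condExp_neg_of_condExp_nonneg hm hm' hf.neg hS ?_ ?_
  · filter_upwards [condExp_neg (m := m') f, hpos] with x hx hxS hS
    simpa [hx] using hxS hS
  · filter_upwards [condExp_neg (m := m) f, hnonpos] with x hx hxS hS
    simpa [hx] using hxS hS

end MeasureTheory

theorem theta_tilde_subset_theta_general {Ω 𝓧 𝓨 P C' : Type*}
    [MeasurableSpace Ω] [MeasurableSpace 𝓧] [MeasurableSpace 𝓨]
    (μ : Measure Ω) [IsProbabilityMeasure μ]
    (X : Ω → 𝓧) (Y : Ω → 𝓨) (hX : Measurable X)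
    (Γ : Set P) (C : Set C') (β : P) (hβ : β ∈ Γ)
    (G : 𝓧 → C' → P → ℝ) (H : 𝓨 → C' → ℝ)
    (hG : ∀ c b, Measurable fun x => G x c b)
    (hHint : ∀ c, Integrable (fun ω => H (Y ω) c) μ)
    -- Assumption 1 (sign restriction) for the true parameter β
    (hsign : ∀ c ∈ C, ∀ᵐ ω ∂μ,
      Real.sign (G (X ω) c β) =
        Real.sign (condExpGiven μ X (fun ω' => H (Y ω') c) ω))
    (b : P)
    -- b ∈ Θ̃
    (hbTilde : ∀ γ ∈ Γ, ∀ c ∈ C, ∀ᵐ ω ∂μ,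
      G (X ω) c b *
        condExpGiven μ (fun ω' => (G (X ω') c b, G (X ω') c γ))
          (fun ω' => H (Y ω') c) ω ≥ 0) :
    -- b ∈ Θ
    ∀ c ∈ C, ∀ᵐ ω ∂μ,
      G (X ω) c b * condExpGiven μ X (fun ω' => H (Y ω') c) ω ≥ 0 := by
  intro c hc
  set pair : 𝓧 → ℝ × ℝ := fun x => (G x c b, G x c β)
  have hm : MeasurableSpace.comap (pair ∘ X) inferInstance ≤
      MeasurableSpace.comap X inferInstance := by
    rw [← MeasurableSpace.comap_comp]
    exact MeasurableSpace.comap_mono ((hG c b).prodMk (hG c β)).comap_le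
  have hpreimage {s : Set (ℝ × ℝ)} (hs : MeasurableSet s) :
      MeasurableSet[MeasurableSpace.comap (pair ∘ X) inferInstance] (pair ∘ X ⁻¹' s) :=
    ⟨s, hs, rfl⟩
  have hsignc := hsign c hc
  have hbβ := hbTilde β hβ c hc
  unfold condExpGiven at hsignc hbβ ⊢
  have hpos_neg : μ {ω | 0 < G (X ω) c b ∧ G (X ω) c β < 0} = 0 := by
    refine measure_eq_zero_of_condExp_neg_of_condExp_nonneg hm hX.comap_le (hHint c)
      (hpreimage ((measurableSet_lt measurable_const measurable_fst).inter
        (measurableSet_lt measurable_snd measurable_const))) ?_ ?_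
    · filter_upwards [hsignc] with ω hs hω using (Real.neg_iff_neg_of_sign_eq hs).mp hω.2
    · filter_upwards [hbβ] with ω h hω using nonneg_of_mul_nonneg_right h hω.1
  have hneg_pos : μ {ω | G (X ω) c b < 0 ∧ 0 < G (X ω) c β} = 0 := by
    refine measure_eq_zero_of_condExp_pos_of_condExp_nonpos hm hX.comap_le (hHint c)
      (hpreimage ((measurableSet_lt measurable_fst measurable_const).inter
        (measurableSet_lt measurable_const measurable_snd))) ?_ ?_
    · filter_upwards [hsignc] with ω hs hω using (Real.pos_iff_pos_of_sign_eq hs).mp hω.2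
    · filter_upwards [hbβ] with ω h hω using nonpos_of_mul_nonneg_right h hω.1
  filter_upwards [measure_eq_zero_iff_ae_notMem.mp hpos_neg,
    measure_eq_zero_iff_ae_notMem.mp hneg_pos, hsignc] with ω h₁ h₂ hs
  have hprod : 0 ≤ G (X ω) c b * G (X ω) c β :=
    not_lt.mp fun h => (mul_neg_iff.mp h).elim h₁ h₂
  exact Real.mul_nonneg_of_mul_nonneg_of_sign_eq hprod hs

/-- If `b ∈ Θ̃`, i.e. `G(X,c,b)·E(H(Y,c)|G(X,c,b),G(X,c,γ)) ≥ 0` a.s. for all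
`(γ,c) ∈ Γ × C`, then `b ∈ Θ`, i.e. `G(X,c,b)·E(H(Y,c)|X) ≥ 0` a.s. for all `c ∈ C`. -/
theorem theta_tilde_subset_theta {Ω 𝓧 𝓨 P C' : Type*}
    [MeasurableSpace Ω] [MeasurableSpace 𝓧] [MeasurableSpace 𝓨]
    (μ : Measure Ω) [IsProbabilityMeasure μ]
    (X : Ω → 𝓧) (Y : Ω → 𝓨) (hX : Measurable X) (hY : Measurable Y)
    (Γ : Set P) (C : Set C') (β : P) (hβ : β ∈ Γ)
    (G : 𝓧 → C' → P → ℝ) (H : 𝓨 → C' → ℝ)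
    (hG : ∀ c b, Measurable fun x => G x c b)
    (hH : ∀ c, Measurable fun y => H y c)
    (hHint : ∀ c, Integrable (fun ω => H (Y ω) c) μ)
    -- Assumption 1 (sign restriction) for the true parameter β
    (hsign : ∀ c ∈ C, ∀ᵐ ω ∂μ,
      Real.sign (G (X ω) c β) =
        Real.sign (condExpGiven μ X (fun ω' => H (Y ω') c) ω))
    -- Assumption 2 (continuity)
    (hcont : ∀ b ∈ Γ, ∀ c ∈ C, μ {ω | G (X ω) c b = 0} = 0)
    (b : P) (hb : b ∈ Γ)
    -- b ∈ Θ̃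
    (hbTilde : ∀ γ ∈ Γ, ∀ c ∈ C, ∀ᵐ ω ∂μ,
      G (X ω) c b *
        condExpGiven μ (fun ω' => (G (X ω') c b, G (X ω') c γ))
          (fun ω' => H (Y ω') c) ω ≥ 0) :
    -- b ∈ Θ
    ∀ c ∈ C, ∀ᵐ ω ∂μ,
      G (X ω) c b * condExpGiven μ X (fun ω' => H (Y ω') c) ω ≥ 0 :=
  theta_tilde_subset_theta_general μ X Y hX Γ C β hβ G H hG hHint hsign b hbTilde
end

section
/- In the binary choice model Y = 1{X'β ≥ ε} with quantile independence Q_τ(ε|X=x) = 0 and ε having positive conditional density near 0, for every x in the support of X: P(Y=1|X=x) > τ ⟺ x'β > 0, P(Y=1|X=x) = τ ⟺ x'β = 0, and P(Y=1|X=x) < τ ⟺ x'β < 0. -/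
open MeasureTheory Set

/-- In the binary choice model `Y = 1{X'β ≥ ε}` under quantile independence
(`Q_τ(ε|X=x) = 0`, i.e. the conditional cdf `F x` of `ε` given `X = x` satisfies `F x 0 = τ`)
and positivity of the conditional density of `ε` near `0` (so `F x` is monotone and strictly
increasing on an open interval around `0`), for every `x` in the support `Γ_X` of `X`:
`P(Y=1|X=x) > τ ↔ x'β > 0`, `P(Y=1|X=x) = τ ↔ x'β = 0`, and `P(Y=1|X=x) < τ ↔ x'β < 0`,
where `P(Y=1|X=x) = P(ε ≤ x'β | X = x) = F x (x'β)`. -/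
theorem binary_choice_sign_equivalences {d : ℕ} (τ : ℝ) (hτ : τ ∈ Ioo (0:ℝ) 1)
    (ΓX : Set (Fin d → ℝ)) (β : Fin d → ℝ)
    -- `F x` is the cdf of `ε` conditional on `X = x`
    (F : (Fin d → ℝ) → ℝ → ℝ)
    (hFmono : ∀ x ∈ ΓX, Monotone (F x))
    -- positive conditional density on an open interval containing 0
    (δ : ℝ) (hδ : 0 < δ)
    (hFstrict : ∀ x ∈ ΓX, StrictMonoOn (F x) (Ioo (-δ) δ))
    -- quantile independence: Q_τ(ε|X=x) = 0
    (hquant : ∀ x ∈ ΓX, F x 0 = τ)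
    -- the conditional choice probability: P(Y=1|X=x) = P(ε ≤ x'β|X=x)
    (PY1 : (Fin d → ℝ) → ℝ)
    (hPY1 : ∀ x ∈ ΓX, PY1 x = F x (∑ i, x i * β i)) :
    ∀ x ∈ ΓX,
      (PY1 x > τ ↔ ∑ i, x i * β i > 0) ∧
      (PY1 x = τ ↔ ∑ i, x i * β i = 0) ∧
      (PY1 x < τ ↔ ∑ i, x i * β i < 0) := by
  intro x hx
  set t := ∑ i, x i * β i with ht
  have hq := hquant x hx
  have hm := hFmono x hx
  have hs := hFstrict x hx
  have h0 : (0:ℝ) ∈ Ioo (-δ) δ := ⟨by linarith, hδ⟩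
  have hpos : t > 0 → F x t > τ := by
    intro htpos
    have hmem : min t (δ/2) ∈ Ioo (-δ) δ :=
      ⟨lt_min_iff.2 ⟨by linarith, by linarith⟩, lt_of_le_of_lt (min_le_right _ _) (by linarith)⟩
    have h1 : F x 0 < F x (min t (δ/2)) := hs h0 hmem (lt_min_iff.2 ⟨htpos, by linarith⟩)
    have h2 : F x (min t (δ/2)) ≤ F x t := hm (min_le_left _ _)
    linarith [hq]
  have hneg : t < 0 → F x t < τ := by
    intro htneg
    have hmem : max t (-(δ/2)) ∈ Ioo (-δ) δ :=
      ⟨lt_of_lt_of_le (by linarith) (le_max_right _ _), max_lt_iff.2 ⟨by linarith, by linarith⟩⟩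
    have h1 : F x (max t (-(δ/2))) < F x 0 := hs hmem h0 (max_lt_iff.2 ⟨htneg, by linarith⟩)
    have h2 : F x t ≤ F x (max t (-(δ/2))) := hm (le_max_left _ _)
    linarith [hq]
  have hp := hPY1 x hx
  refine ⟨⟨fun h => ?_, fun h => by rw [hp]; exact hpos h⟩,
    ⟨fun h => ?_, fun h => by rw [hp, ← ht, h, hq]⟩,
    ⟨fun h => ?_, fun h => by rw [hp]; exact hneg h⟩⟩
  · rcases lt_trichotomy t 0 with h1 | h1 | h1
    · have := hneg h1; rw [hp] at h; linarith
    · rw [hp, ← ht, h1, hq] at h; linarith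
    · exact h1
  · rcases lt_trichotomy t 0 with h1 | h1 | h1
    · have := hneg h1; rw [hp] at h; linarith
    · exact h1
    · have := hpos h1; rw [hp] at h; linarith
  · rcases lt_trichotomy t 0 with h1 | h1 | h1
    · exact h1
    · rw [hp, ← ht, h1, hq] at h; linarith
    · have := hpos h1; rw [hp] at h; linarith
end

section
/- In the binary choice model under quantile independence, sgn[P(Y=1|X) − τ] = sgn[X'β] almost surely, and consequently Q_{1−τ}(Y|X) = 1{X'β > 0} almost surely when P(X'β = 0) = 0. -/
open MeasureTheory Set

/-- In the binary choice model `Y = 1{X'β ≥ ε}` under quantile independence,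
`sgn[P(Y=1|X) − τ] = sgn[X'β]` almost surely, and consequently the conditional `(1−τ)`
quantile of `Y` given `X` equals `1{X'β > 0}` almost surely when `P(X'β = 0) = 0`. -/
theorem binary_choice_sign_and_quantile {d : ℕ} {Ω : Type*} [MeasurableSpace Ω]
    (μ : Measure Ω) [IsProbabilityMeasure μ]
    (τ : ℝ) (hτ : τ ∈ Ioo (0:ℝ) 1)
    (X : Ω → Fin d → ℝ) (hX : Measurable X)
    (ΓX : Set (Fin d → ℝ)) (hsupp : ∀ᵐ ω ∂μ, X ω ∈ ΓX)
    (β : Fin d → ℝ)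
    -- `F x` is the cdf of `ε` conditional on `X = x`
    (F : (Fin d → ℝ) → ℝ → ℝ)
    (hFmono : ∀ x ∈ ΓX, Monotone (F x))
    (δ : ℝ) (hδ : 0 < δ)
    (hFstrict : ∀ x ∈ ΓX, StrictMonoOn (F x) (Ioo (-δ) δ))
    -- quantile independence: Q_τ(ε|X=x) = 0
    (hquant : ∀ x ∈ ΓX, F x 0 = τ)
    -- conditional choice probability P(Y=1|X=x) = P(ε ≤ x'β|X=x) = F x (x'β)
    (PY1 : (Fin d → ℝ) → ℝ)
    (hPY1 : ∀ x ∈ ΓX, PY1 x = F x (∑ i, x i * β i))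
    -- `FY x` is the cdf of the binary outcome `Y` given `X = x`
    (FY : (Fin d → ℝ) → ℝ → ℝ)
    (hFY : ∀ x ∈ ΓX, ∀ t : ℝ,
      FY x t = if t < 0 then 0 else if t < 1 then 1 - PY1 x else 1)
    -- the index X'β is continuously distributed
    (hcont : μ {ω | ∑ i, X ω i * β i = 0} = 0) :
    (∀ᵐ ω ∂μ,
      Real.sign (PY1 (X ω) - τ) = Real.sign (∑ i, X ω i * β i)) ∧
    (∀ᵐ ω ∂μ,
      sInf {t : ℝ | FY (X ω) t ≥ 1 - τ} =
        if 0 < ∑ i, X ω i * β i then 1 else 0) := by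
  obtain ⟨hτ0, hτ1⟩ := hτ
  have h2 : ∀ᵐ ω ∂μ, ∑ i, X ω i * β i ≠ 0 := by
    rw [ae_iff]; simpa using hcont
  have key : ∀ x ∈ ΓX,
      (0 < ∑ i, x i * β i → τ < PY1 x) ∧ (∑ i, x i * β i < 0 → PY1 x < τ) := by
    intro x hx
    set s := ∑ i, x i * β i with hs
    constructor
    · intro hpos
      have ht0 : (0:ℝ) < min s (δ/2) := lt_min hpos (by linarith)
      have htδ : min s (δ/2) < δ := lt_of_le_of_lt (min_le_right _ _) (by linarith)
      have h1 : F x 0 < F x (min s (δ/2)) :=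
        hFstrict x hx ⟨by linarith, hδ⟩ ⟨by linarith, htδ⟩ ht0
      have h2' : F x (min s (δ/2)) ≤ F x s := hFmono x hx (min_le_left _ _)
      rw [hPY1 x hx, ← hs, ← hquant x hx]; linarith
    · intro hneg
      have ht0 : max s (-(δ/2)) < 0 := max_lt hneg (by linarith)
      have htδ : -δ < max s (-(δ/2)) := lt_of_lt_of_le (by linarith) (le_max_right _ _)
      have h1 : F x (max s (-(δ/2))) < F x 0 :=
        hFstrict x hx ⟨htδ, by linarith⟩ ⟨by linarith, hδ⟩ ht0
      have h2' : F x s ≤ F x (max s (-(δ/2))) := hFmono x hx (le_max_left _ _)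
      rw [hPY1 x hx, ← hs, ← hquant x hx]; linarith
  constructor
  · filter_upwards [hsupp, h2] with ω hx hs
    rcases hs.lt_or_gt with h | h
    · rw [Real.sign_of_neg h, Real.sign_of_neg (by have := (key _ hx).2 h; linarith)]
    · rw [Real.sign_of_pos h, Real.sign_of_pos (by have := (key _ hx).1 h; linarith)]
  · filter_upwards [hsupp, h2] with ω hx hs
    rcases hs.lt_or_gt with h | h
    · have hP := (key _ hx).2 h
      have hset : {t : ℝ | FY (X ω) t ≥ 1 - τ} = Ici 0 := by
        ext t
        simp only [mem_setOf_eq, mem_Ici, hFY _ hx t]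
        split_ifs with h1 h2 <;> constructor <;> intro h' <;> first | linarith | skip
      rw [hset, csInf_Ici, if_neg (by linarith)]
    · have hP := (key _ hx).1 h
      have hset : {t : ℝ | FY (X ω) t ≥ 1 - τ} = Ici 1 := by
        ext t
        simp only [mem_setOf_eq, mem_Ici, hFY _ hx t]
        split_ifs with h1 h2 <;> constructor <;> intro h' <;> first | linarith | skip
      rw [hset, csInf_Ici, if_pos h]
end

section
/- In the binary choice model under the quantile independence and continuous covariate conditions, the identified set Θ = {b ∈ Γ : X'b·[P(Y=1|X) − τ] ≥ 0 a.s.} equals {b ∈ Γ : b'XX'β ≥ 0 a.s.}; that is, b is in the identified set if and only if the indices X'b and X'β have the same sign almost surely. -/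
open MeasureTheory Set

/-- In the binary choice model under the quantile independence and continuous
covariate conditions, the identified set
`Θ = {b ∈ Γ : X'b·[P(Y=1|X) − τ] ≥ 0 a.s.}` equals `{b ∈ Γ : (X'b)(X'β) ≥ 0 a.s.}`:
`b` is in the identified set iff the indices `X'b` and `X'β` have the same sign a.s. -/
theorem identified_set_sign_characterization {d : ℕ} [NeZero d] {Ω : Type*} [MeasurableSpace Ω]
    (μ : Measure Ω) [IsProbabilityMeasure μ]
    (τ : ℝ) (hτ : τ ∈ Ioo (0:ℝ) 1)
    (X : Ω → Fin d → ℝ) (hX : Measurable X)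
    (ΓX : Set (Fin d → ℝ)) (hsupp : ∀ᵐ ω ∂μ, X ω ∈ ΓX)
    (Γ : Set (Fin d → ℝ)) (β : Fin d → ℝ) (hβ : β ∈ Γ)
    -- scale normalization |b₁| = 1
    (hscale : ∀ b ∈ Γ, |b 0| = 1)
    -- the index X'b is continuously distributed for every b ∈ Γ
    (hcont : ∀ b ∈ Γ, μ {ω | ∑ i, X ω i * b i = 0} = 0)
    -- `F x` is the cdf of `ε` conditional on `X = x`
    (F : (Fin d → ℝ) → ℝ → ℝ)
    (hFmono : ∀ x ∈ ΓX, Monotone (F x))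
    (δ : ℝ) (hδ : 0 < δ)
    (hFstrict : ∀ x ∈ ΓX, StrictMonoOn (F x) (Ioo (-δ) δ))
    -- quantile independence: Q_τ(ε|X=x) = 0
    (hquant : ∀ x ∈ ΓX, F x 0 = τ)
    -- conditional choice probability: P(Y=1|X=x) = P(ε ≤ x'β|X=x) = F x (x'β)
    (PY1 : (Fin d → ℝ) → ℝ)
    (hPY1 : ∀ x ∈ ΓX, PY1 x = F x (∑ i, x i * β i)) :
    {b ∈ Γ | ∀ᵐ ω ∂μ, (∑ i, X ω i * b i) * (PY1 (X ω) - τ) ≥ 0} =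
    {b ∈ Γ | ∀ᵐ ω ∂μ, (∑ i, X ω i * b i) * (∑ i, X ω i * β i) ≥ 0} := by
  ext b
  simp only [mem_setOf_eq]
  refine and_congr_right fun hb => ?_
  have key : ∀ x ∈ ΓX, ((∑ i, x i * b i) * (PY1 x - τ) ≥ 0 ↔
      (∑ i, x i * b i) * (∑ i, x i * β i) ≥ 0) := by
    intro x hx
    set s := ∑ i, x i * b i with hs
    set t := ∑ i, x i * β i with ht
    rw [hPY1 x hx, ← ht]
    have h0 : F x 0 = τ := hquant x hx
    have pos : ∀ u : ℝ, 0 < u → τ < F x u := by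
      intro u hu
      have hm : 0 < min u (δ / 2) := lt_min hu (by linarith)
      have h1 : F x 0 < F x (min u (δ / 2)) :=
        hFstrict x hx ⟨by linarith, by linarith⟩
          ⟨by linarith, lt_of_le_of_lt (min_le_right _ _) (by linarith)⟩ hm
      have h2 : F x (min u (δ / 2)) ≤ F x u := hFmono x hx (min_le_left _ _)
      linarith [h0 ▸ h1]
    have neg : ∀ u : ℝ, u < 0 → F x u < τ := by
      intro u hu
      have hm : max u (-(δ / 2)) < 0 := max_lt hu (by linarith)
      have h1 : F x (max u (-(δ / 2))) < F x 0 :=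
        hFstrict x hx
          ⟨lt_of_lt_of_le (by linarith) (le_max_right _ _), by linarith⟩
          ⟨by linarith, by linarith⟩ hm
      have h2 : F x u ≤ F x (max u (-(δ / 2))) := hFmono x hx (le_max_left _ _)
      linarith [h0 ▸ h1]
    constructor
    · intro h
      by_contra hc
      push_neg at hc
      rcases mul_neg_iff.mp hc with ⟨hs1, hs2⟩ | ⟨hs1, hs2⟩
      · have := neg t hs2; nlinarith
      · have := pos t hs2; nlinarith
    · intro h
      by_contra hc
      push_neg at hc
      rcases mul_neg_iff.mp hc with ⟨hs1, hs2⟩ | ⟨hs1, hs2⟩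
      · have htneg : t < 0 := by
          by_contra ht0
          push_neg at ht0
          have := hFmono x hx ht0
          rw [h0] at this
          linarith
        nlinarith
      · have htpos : 0 < t := by
          by_contra ht0
          push_neg at ht0
          have := hFmono x hx ht0
          rw [h0] at this
          linarith
        nlinarith
  constructor
  · intro h
    filter_upwards [hsupp, h] with ω hω hω2
    exact (key _ hω).mp hω2
  · intro h
    filter_upwards [hsupp, h] with ω hω hω2
    exact (key _ hω).mpr hω2
end

section
/- In the binary choice model under the stated conditions, the identified set satisfies the sandwich relation Θ̲ ⊆ Θ = Θ̃ ⊆ Θ̄, where Θ̲ = {b : X'b·[P(Y=1|X'γ) − τ] ≥ 0 a.s. for all γ ∈ Γ}, Θ = {b : X'b·[P(Y=1|X) − τ] ≥ 0 a.s.}, Θ̃ = {b : X'b·[P(Y=1|X'b, X'γ) − τ] ≥ 0 a.s. for all γ ∈ Γ}, and Θ̄ = {b : X'b·[P(Y=1|X'b) − τ] ≥ 0 a.s.}. -/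
open MeasureTheory Set

/-!
If `Z` is measurable for a σ-algebra `m ≤ m'`, then a sign restriction `Z · (μ[Y|m'] - τ) ≥ 0`
survives coarsening to `m`: on the `m`-measurable sets `{Z > 0}` and `{Z < 0}` the bound on
`μ[Y|m']` is inherited by its average `μ[Y|m]`, and likewise for strict signs. This gives
`Θ ⊆ Θ̃ ⊆ Θ̄`. Conversely, the quantile restriction makes `P(Y=1|X) - τ` carry the strict sign of
the index `X'β`, which is measurable for `σ(X'β)` and for `σ(X'b, X'β)`; the conditional
expectations given these coarser σ-algebras then carry the same strict sign, so a sign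
restriction for them transfers back to `P(Y=1|X)`, giving `Θ̲ ⊆ Θ` and `Θ̃ ⊆ Θ`.
-/

namespace MeasureTheory

variable {Ω : Type*} {m m' : MeasurableSpace Ω} [mΩ : MeasurableSpace Ω] {μ : Measure Ω}
  {f Y Z V W : Ω → ℝ} {s : Set Ω} {τ : ℝ}

lemma ae_nonneg_condExp_of_ae_nonneg_on (hf : Integrable f μ) (hs : MeasurableSet[m] s)
    (h : ∀ᵐ ω ∂μ, ω ∈ s → 0 ≤ f ω) : ∀ᵐ ω ∂μ, ω ∈ s → 0 ≤ μ[f|m] ω := by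
  have hind : 0 ≤ᵐ[μ] s.indicator f := by
    filter_upwards [h] with ω hω
    by_cases hωs : ω ∈ s <;> simp [hωs, hω]
  filter_upwards [condExp_nonneg (m := m) hind, condExp_indicator hf hs] with ω hpos heq hωs
  simpa [heq, hωs] using hpos

lemma ae_pos_condExp_of_ae_pos_on [IsFiniteMeasure μ] (hm : m ≤ mΩ) (hf : Integrable f μ)
    (hs : MeasurableSet[m] s) (h : ∀ᵐ ω ∂μ, ω ∈ s → 0 < f ω) :
    ∀ᵐ ω ∂μ, ω ∈ s → 0 < μ[f|m] ω := by
  set N := s ∩ {ω | μ[f|m] ω ≤ 0}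
  have hN : MeasurableSet[m] N :=
    hs.inter (measurableSet_le stronglyMeasurable_condExp.measurable measurable_const)
  have hpos : ∀ᵐ ω ∂μ.restrict N, 0 < f ω :=
    (ae_restrict_iff' (hm _ hN)).2 (h.mono fun ω hω hωN => hω hωN.1)
  -- `∫_N f = ∫_N μ[f|m] ≤ 0` although `f > 0` on `N`, so `N` is null.
  have hint : ∫ ω in N, f ω ∂μ = 0 := by
    refine le_antisymm ?_ (integral_nonneg_of_ae (hpos.mono fun _ h => h.le))
    rw [← setIntegral_condExp hm hf hN]
    exact setIntegral_nonpos (hm _ hN) fun ω hω => hω.2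
  have hzero : f =ᵐ[μ.restrict N] 0 :=
    (integral_eq_zero_iff_of_nonneg_ae (hpos.mono fun _ h => h.le) hf.integrableOn).1 hint
  have hnull : ∀ᵐ ω ∂μ.restrict N, False := by
    filter_upwards [hpos, hzero] with ω hω hω0
    exact hω.ne' hω0
  filter_upwards [(ae_restrict_iff' (hm _ hN)).1 hnull] with ω hω hωs
  exact lt_of_not_ge fun hle => hω ⟨hωs, hle⟩

lemma ae_mul_condExp_nonneg (hf : Integrable f μ) (hZ : Measurable[m] Z)
    (h : ∀ᵐ ω ∂μ, 0 ≤ Z ω * f ω) : ∀ᵐ ω ∂μ, 0 ≤ Z ω * μ[f|m] ω := by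
  have hpos := ae_nonneg_condExp_of_ae_nonneg_on hf (hZ measurableSet_Ioi)
    (h.mono fun ω hω hZω => nonneg_of_mul_nonneg_right hω hZω)
  have hneg := ae_nonneg_condExp_of_ae_nonneg_on hf.neg (hZ measurableSet_Iio)
    (h.mono fun ω hω (hZω : Z ω < 0) => show 0 ≤ -f ω by nlinarith)
  filter_upwards [hpos, hneg, condExp_neg f m] with ω hωpos hωneg hωeq
  rcases lt_trichotomy (Z ω) 0 with hZω | hZω | hZω
  · have := hωneg hZω
    rw [hωeq, Pi.neg_apply] at this
    nlinarith
  · simp [hZω]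
  · exact mul_nonneg hZω.le (hωpos hZω)

lemma ae_mul_condExp_pos [IsFiniteMeasure μ] (hm : m ≤ mΩ) (hf : Integrable f μ)
    (hZ : Measurable[m] Z) (h : ∀ᵐ ω ∂μ, 0 < Z ω * f ω) : ∀ᵐ ω ∂μ, 0 < Z ω * μ[f|m] ω := by
  have hpos := ae_pos_condExp_of_ae_pos_on hm hf (hZ measurableSet_Ioi)
    (h.mono fun ω hω hZω => pos_of_mul_pos_right hω hZω.le)
  have hneg := ae_pos_condExp_of_ae_pos_on hm hf.neg (hZ measurableSet_Iio)
    (h.mono fun ω hω (hZω : Z ω < 0) => show 0 < -f ω by nlinarith)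
  filter_upwards [h, hpos, hneg, condExp_neg f m] with ω hω hωpos hωneg hωeq
  rcases lt_trichotomy (Z ω) 0 with hZω | hZω | hZω
  · have := hωneg hZω
    rw [hωeq, Pi.neg_apply] at this
    nlinarith
  · simp [hZω] at hω
  · exact mul_pos hZω (hωpos hZω)

lemma condExp_condExp_sub_const [IsFiniteMeasure μ] (hm : m ≤ m') (hm' : m' ≤ mΩ) (c : ℝ) :
    μ[μ[Y|m'] - fun _ => c|m] =ᵐ[μ] μ[Y|m] - fun _ => c := by
  have hsub := condExp_sub (μ := μ) integrable_condExp (integrable_const c) m (f := μ[Y|m'])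
  rw [condExp_const (hm.trans hm')] at hsub
  exact hsub.trans ((condExp_condExp_of_le hm hm').sub Filter.EventuallyEq.rfl)

lemma ae_mul_condExp_sub_nonneg_of_le [IsFiniteMeasure μ] (hm : m ≤ m') (hm' : m' ≤ mΩ)
    (hZ : Measurable[m] Z) (h : ∀ᵐ ω ∂μ, 0 ≤ Z ω * (μ[Y|m'] ω - τ)) :
    ∀ᵐ ω ∂μ, 0 ≤ Z ω * (μ[Y|m] ω - τ) := by
  filter_upwards [ae_mul_condExp_nonneg (integrable_condExp.sub (integrable_const τ)) hZ h,
    condExp_condExp_sub_const hm hm' τ] with ω hω heq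
  rwa [heq, Pi.sub_apply] at hω

lemma ae_mul_condExp_sub_pos_of_le [IsFiniteMeasure μ] (hm : m ≤ m') (hm' : m' ≤ mΩ)
    (hZ : Measurable[m] Z) (h : ∀ᵐ ω ∂μ, 0 < Z ω * (μ[Y|m'] ω - τ)) :
    ∀ᵐ ω ∂μ, 0 < Z ω * (μ[Y|m] ω - τ) := by
  filter_upwards [ae_mul_condExp_pos (hm.trans hm') (integrable_condExp.sub (integrable_const τ))
    hZ h, condExp_condExp_sub_const hm hm' τ] with ω hω heq
  rwa [heq, Pi.sub_apply] at hω

lemma ae_mul_condExp_sub_nonneg_of_sign_index [IsFiniteMeasure μ] (hm : m ≤ m') (hm' : m' ≤ mΩ)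
    (hV : Measurable[m] V) (hsign : ∀ᵐ ω ∂μ, 0 < V ω * (μ[Y|m'] ω - τ))
    (h : ∀ᵐ ω ∂μ, 0 ≤ W ω * (μ[Y|m] ω - τ)) : ∀ᵐ ω ∂μ, 0 ≤ W ω * (μ[Y|m'] ω - τ) := by
  filter_upwards [hsign, ae_mul_condExp_sub_pos_of_le hm hm' hV hsign, h] with ω hfine hcoarse hω
  -- `μ[Y|m] ω - τ` and `μ[Y|m'] ω - τ` both carry the strict sign of `V ω`.
  nlinarith

end MeasureTheory

lemma mul_sub_pos_of_strictMonoOn {F : ℝ → ℝ} {δ t : ℝ} (hmono : Monotone F) (hδ : 0 < δ)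
    (hstrict : StrictMonoOn F (Ioo (-δ) δ)) (ht : t ≠ 0) : 0 < t * (F t - F 0) := by
  have h0 : (0 : ℝ) ∈ Ioo (-δ) δ := ⟨neg_lt_zero.2 hδ, hδ⟩
  rcases ht.lt_or_gt with ht | ht
  · have hlt : F t < F 0 := calc
      F t ≤ F (max t (-δ / 2)) := hmono (le_max_left _ _)
      _ < F 0 := hstrict ⟨lt_max_of_lt_right (by linarith), max_lt (by linarith) (by linarith)⟩ h0
        (max_lt ht (by linarith))
    exact mul_pos_of_neg_of_neg ht (sub_neg.2 hlt)
  · have hlt : F 0 < F t := calc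
      F 0 < F (min t (δ / 2)) :=
        hstrict h0 ⟨lt_min (by linarith) (by linarith), min_lt_of_right_lt (by linarith)⟩
          (lt_min ht (by linarith))
      _ ≤ F t := hmono (min_le_left _ _)
    exact mul_pos ht (sub_pos.2 hlt)

theorem sandwich_relation_general {d : ℕ} {Ω : Type*} [MeasurableSpace Ω]
    (μ : Measure Ω) [IsProbabilityMeasure μ]
    (τ : ℝ)
    (X : Ω → Fin d → ℝ) (hX : Measurable X)
    (ΓX : Set (Fin d → ℝ)) (hsupp : ∀ᵐ ω ∂μ, X ω ∈ ΓX)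
    (Γ : Set (Fin d → ℝ)) (β : Fin d → ℝ) (hβ : β ∈ Γ)
    -- the indices X'b are continuously distributed for every b ∈ Γ
    (hcont : ∀ b ∈ Γ, μ {ω | ∑ i, X ω i * b i = 0} = 0)
    (Y : Ω → ℝ)
    -- `F x` is the cdf of `ε` conditional on `X = x`
    (F : (Fin d → ℝ) → ℝ → ℝ)
    (hFmono : ∀ x ∈ ΓX, Monotone (F x))
    (δ : ℝ) (hδ : 0 < δ)
    (hFstrict : ∀ x ∈ ΓX, StrictMonoOn (F x) (Ioo (-δ) δ))
    -- quantile independence: Q_τ(ε|X=x) = 0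
    (hquant : ∀ x ∈ ΓX, F x 0 = τ)
    -- P(Y=1|X) = F(X)(X'β) almost surely
    (hPY1 : condExpGiven μ X Y =ᵐ[μ] fun ω => F (X ω) (∑ i, X ω i * β i)) :
    -- Θ̲ ⊆ Θ
    ({b ∈ Γ | ∀ γ ∈ Γ, ∀ᵐ ω ∂μ,
        (∑ i, X ω i * b i) *
          (condExpGiven μ (fun ω' => ∑ i, X ω' i * γ i) Y ω - τ) ≥ 0} ⊆
      {b ∈ Γ | ∀ᵐ ω ∂μ,
        (∑ i, X ω i * b i) * (condExpGiven μ X Y ω - τ) ≥ 0}) ∧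
    -- Θ = Θ̃
    ({b ∈ Γ | ∀ᵐ ω ∂μ,
        (∑ i, X ω i * b i) * (condExpGiven μ X Y ω - τ) ≥ 0} =
      {b ∈ Γ | ∀ γ ∈ Γ, ∀ᵐ ω ∂μ,
        (∑ i, X ω i * b i) *
          (condExpGiven μ (fun ω' => (∑ i, X ω' i * b i, ∑ i, X ω' i * γ i)) Y ω - τ)
            ≥ 0}) ∧
    -- Θ̃ ⊆ Θ̄
    ({b ∈ Γ | ∀ γ ∈ Γ, ∀ᵐ ω ∂μ,
        (∑ i, X ω i * b i) *
          (condExpGiven μ (fun ω' => (∑ i, X ω' i * b i, ∑ i, X ω' i * γ i)) Y ω - τ)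
            ≥ 0} ⊆
      {b ∈ Γ | ∀ᵐ ω ∂μ,
        (∑ i, X ω i * b i) *
          (condExpGiven μ (fun ω' => ∑ i, X ω' i * b i) Y ω - τ) ≥ 0}) := by
  unfold condExpGiven at *
  have hindex (b : Fin d → ℝ) : Measurable fun x : Fin d → ℝ => ∑ i, x i * b i :=
    Finset.measurable_sum _ fun i _ => (measurable_pi_apply i).mul_const _
  have hpair (b γ : Fin d → ℝ) : Measurable[MeasurableSpace.comap X inferInstance]
      fun ω => (∑ i, X ω i * b i, ∑ i, X ω i * γ i) :=
    ((hindex b).prodMk (hindex γ)).comp (comap_measurable X)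
  have hsign : ∀ᵐ ω ∂μ,
      0 < (∑ i, X ω i * β i) * (μ[Y|MeasurableSpace.comap X inferInstance] ω - τ) := by
    filter_upwards [hPY1, hsupp, measure_eq_zero_iff_ae_notMem.1 (hcont β hβ)]
      with ω hω hωX hωβ
    rw [hω, ← hquant _ hωX]
    exact mul_sub_pos_of_strictMonoOn (hFmono _ hωX) hδ (hFstrict _ hωX) hωβ
  refine ⟨?_, Subset.antisymm ?_ ?_, ?_⟩
  · rintro b ⟨hb, h⟩
    exact ⟨hb, ae_mul_condExp_sub_nonneg_of_sign_index
      ((hindex β).comp (comap_measurable X)).comap_le hX.comap_le (comap_measurable _)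
      hsign (h β hβ)⟩
  · rintro b ⟨hb, h⟩
    exact ⟨hb, fun γ _ => ae_mul_condExp_sub_nonneg_of_le (hpair b γ).comap_le hX.comap_le
      (measurable_fst.comp (comap_measurable _)) h⟩
  · rintro b ⟨hb, h⟩
    exact ⟨hb, ae_mul_condExp_sub_nonneg_of_sign_index (hpair b β).comap_le hX.comap_le
      (measurable_snd.comp (comap_measurable _)) hsign (h β hβ)⟩
  · rintro b ⟨hb, h⟩
    refine ⟨hb, ae_mul_condExp_sub_nonneg_of_le ?_ ((hpair b β).mono hX.comap_le le_rfl).comap_le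
      (comap_measurable _) (h β hβ)⟩
    exact Measurable.comap_le (comap_measurable _).fst

/-- In the binary choice model under the stated conditions, the identified set
satisfies the sandwich relation `Θ̲ ⊆ Θ = Θ̃ ⊆ Θ̄`, where the four sets condition on,
respectively: the single index `X'γ` for all `γ ∈ Γ`; the full covariate vector `X`;
the pair of indices `(X'b, X'γ)` for all `γ ∈ Γ`; and the single index `X'b`. -/
theorem sandwich_relation {d : ℕ} [NeZero d] {Ω : Type*} [MeasurableSpace Ω]
    (μ : Measure Ω) [IsProbabilityMeasure μ]
    (τ : ℝ) (hτ : τ ∈ Ioo (0:ℝ) 1)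
    (X : Ω → Fin d → ℝ) (hX : Measurable X)
    (ε : Ω → ℝ) (hε : Measurable ε)
    (ΓX : Set (Fin d → ℝ)) (hsupp : ∀ᵐ ω ∂μ, X ω ∈ ΓX)
    (Γ : Set (Fin d → ℝ)) (β : Fin d → ℝ) (hβ : β ∈ Γ)
    -- scale normalization |b₁| = 1
    (hscale : ∀ b ∈ Γ, |b 0| = 1)
    -- the indices X'b are continuously distributed for every b ∈ Γ
    (hcont : ∀ b ∈ Γ, μ {ω | ∑ i, X ω i * b i = 0} = 0)
    -- the binary outcome: Y = 1{X'β ≥ ε}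
    (Y : Ω → ℝ)
    (hYdef : ∀ ω, Y ω = if ε ω ≤ ∑ i, X ω i * β i then 1 else 0)
    -- `F x` is the cdf of `ε` conditional on `X = x`
    (F : (Fin d → ℝ) → ℝ → ℝ)
    (hFmono : ∀ x ∈ ΓX, Monotone (F x))
    (δ : ℝ) (hδ : 0 < δ)
    (hFstrict : ∀ x ∈ ΓX, StrictMonoOn (F x) (Ioo (-δ) δ))
    -- quantile independence: Q_τ(ε|X=x) = 0
    (hquant : ∀ x ∈ ΓX, F x 0 = τ)
    -- P(Y=1|X) = F(X)(X'β) almost surely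
    (hPY1 : condExpGiven μ X Y =ᵐ[μ] fun ω => F (X ω) (∑ i, X ω i * β i)) :
    -- Θ̲ ⊆ Θ
    ({b ∈ Γ | ∀ γ ∈ Γ, ∀ᵐ ω ∂μ,
        (∑ i, X ω i * b i) *
          (condExpGiven μ (fun ω' => ∑ i, X ω' i * γ i) Y ω - τ) ≥ 0} ⊆
      {b ∈ Γ | ∀ᵐ ω ∂μ,
        (∑ i, X ω i * b i) * (condExpGiven μ X Y ω - τ) ≥ 0}) ∧
    -- Θ = Θ̃
    ({b ∈ Γ | ∀ᵐ ω ∂μ,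
        (∑ i, X ω i * b i) * (condExpGiven μ X Y ω - τ) ≥ 0} =
      {b ∈ Γ | ∀ γ ∈ Γ, ∀ᵐ ω ∂μ,
        (∑ i, X ω i * b i) *
          (condExpGiven μ (fun ω' => (∑ i, X ω' i * b i, ∑ i, X ω' i * γ i)) Y ω - τ)
            ≥ 0}) ∧
    -- Θ̃ ⊆ Θ̄
    ({b ∈ Γ | ∀ γ ∈ Γ, ∀ᵐ ω ∂μ,
        (∑ i, X ω i * b i) *
          (condExpGiven μ (fun ω' => (∑ i, X ω' i * b i, ∑ i, X ω' i * γ i)) Y ω - τ)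
            ≥ 0} ⊆
      {b ∈ Γ | ∀ᵐ ω ∂μ,
        (∑ i, X ω i * b i) *
          (condExpGiven μ (fun ω' => ∑ i, X ω' i * b i) Y ω - τ) ≥ 0}) :=
  sandwich_relation_general μ τ X hX ΓX hsupp Γ β hβ hcont Y F hFmono δ hδ hFstrict hquant hPY1
end

section
/- In the counterexample construction with X₁ ~ U(0,1) independent of X₂ ~ U(−1,1), β = (1,1), ε = √(1+X₂²)·ξ with ξ independent of X and distribution function F_ξ equal to τ + ct on (−1,1] (0 < c < min{τ,1−τ}): for every s ≥ 0, P(Y=1 | X₁ = s) = ∫_{−1}^{1} F_ξ((1+u²)^{−1/2}(s+u)) du / 2 ≥ τ, where Y = 1{X₁ + X₂ ≥ ε}. In particular, the point b̃ = (1,0) satisfies sgn(X'b̃) = sgn(P(Y=1|X'b̃) − τ) almost surely (so b̃ ∈ Θ̄) even though P(X'b̃ > 0 and X'β < 0) > 0 (so b̃ ∉ Θ). -/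
/-!
Conditioning on `X₁ = s` freezes `X₁` and integrates out `X₂` and `ξ`, which are independent of
it, so `P(Y = 1 | X₁ = s) = ½ ∫_{-1}^{1} F_ξ((s + u)/√(1 + u²)) du`. This is strictly increasing
in `s` because `F_ξ` is. At `s = 0` it equals `τ`: the argument `u/√(1 + u²)` stays in `(-1, 1)`,
where `F_ξ` is affine, and its odd part integrates to zero. Hence `P(Y = 1 | X₁) > τ` whenever
`X₁ > 0`, i.e. almost surely, although `X₁ + X₂ < 0` with positive probability.
-/

open MeasureTheory ProbabilityTheory Set

/-- The uniform probability measure on the interval `(a, b)`. -/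
noncomputable def uniformOnIoo (a b : ℝ) : Measure ℝ :=
  (ENNReal.ofReal (b - a))⁻¹ • (volume.restrict (Ioo a b))

lemma intervalIntegral_eq_zero_of_odd {f : ℝ → ℝ} (hf : Function.Odd f) (a : ℝ) :
    ∫ x in -a..a, f x = 0 := by
  have h := intervalIntegral.integral_comp_neg (a := -a) (b := a) f
  simp only [hf _, intervalIntegral.integral_neg, neg_neg] at h
  linarith

lemma abs_div_sqrt_one_add_sq_lt_one (u : ℝ) : |u / √(1 + u ^ 2)| < 1 := by
  have hpos : 0 < √(1 + u ^ 2) := by positivity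
  rw [abs_div, abs_of_pos hpos, div_lt_one hpos, ← Real.sqrt_sq_eq_abs u]
  exact Real.sqrt_lt_sqrt (sq_nonneg u) (lt_one_add _)

section CondChoiceProb

variable {F : ℝ → ℝ}

/-- `P(Y = 1 | X₁ = s)` when `ξ` has cdf `F`. -/
noncomputable def condChoiceProb (F : ℝ → ℝ) (s : ℝ) : ℝ :=
  (∫ u in (-1 : ℝ)..1, F ((s + u) / √(1 + u ^ 2))) / 2

lemma condChoiceProb_zero {τ c : ℝ} (hF : ∀ t ∈ Ioc (-1 : ℝ) 1, F t = τ + c * t) :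
    condChoiceProb F 0 = τ := by
  have harg (u : ℝ) : u / √(1 + u ^ 2) ∈ Ioc (-1 : ℝ) 1 := by
    obtain ⟨h₁, h₂⟩ := abs_lt.1 (abs_div_sqrt_one_add_sq_lt_one u)
    exact ⟨h₁, h₂.le⟩
  have hodd : Function.Odd fun u : ℝ => u / √(1 + u ^ 2) := fun u => by
    simp only [neg_sq, neg_div]
  have hint : IntervalIntegrable (fun u : ℝ => u / √(1 + u ^ 2)) volume (-1) 1 :=
    (continuous_id.div (by fun_prop) fun u => (by positivity)).intervalIntegrable _ _
  simp only [condChoiceProb, zero_add, hF _ (harg _)]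
  rw [intervalIntegral.integral_add intervalIntegrable_const (hint.const_mul c),
    intervalIntegral.integral_const_mul, intervalIntegral_eq_zero_of_odd hodd,
    intervalIntegral.integral_const]
  norm_num

lemma strictMono_condChoiceProb (hFc : Continuous F) (hFm : StrictMono F) :
    StrictMono (condChoiceProb F) := by
  have hcont (s : ℝ) : Continuous fun u : ℝ => F ((s + u) / √(1 + u ^ 2)) :=
    hFc.comp ((continuous_const.add continuous_id).div (by fun_prop) fun u => (by positivity))
  have hlt {s s' : ℝ} (h : s < s') (u : ℝ) :
      F ((s + u) / √(1 + u ^ 2)) < F ((s' + u) / √(1 + u ^ 2)) :=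
    hFm (div_lt_div_of_pos_right (by linarith) (by positivity))
  intro s s' h
  refine div_lt_div_of_pos_right ?_ two_pos
  exact intervalIntegral.integral_lt_integral_of_continuousOn_of_le_of_exists_lt (by norm_num)
    (hcont s).continuousOn (hcont s').continuousOn (fun u _ => (hlt h u).le)
    ⟨0, by norm_num, hlt h 0⟩

end CondChoiceProb

lemma integral_uniformOnIoo {a b : ℝ} (hab : a < b) (g : ℝ → ℝ) :
    ∫ x, g x ∂uniformOnIoo a b = (∫ x in a..b, g x) / (b - a) := by
  rw [uniformOnIoo, integral_smul_measure, intervalIntegral.integral_of_le hab.le,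
    integral_Ioc_eq_integral_Ioo, ENNReal.toReal_inv, ENNReal.toReal_ofReal (by linarith),
    smul_eq_mul, inv_mul_eq_div]

lemma ae_mem_Ioo_of_map_eq_uniformOnIoo {Ω : Type*} [MeasurableSpace Ω] {μ : Measure Ω}
    {X : Ω → ℝ} {a b : ℝ} (hX : Measurable X) (hlaw : μ.map X = uniformOnIoo a b) :
    ∀ᵐ ω ∂μ, X ω ∈ Ioo a b := by
  refine ae_of_ae_map hX.aemeasurable ?_
  rw [hlaw, uniformOnIoo]
  exact Measure.ae_smul_measure (ae_restrict_mem measurableSet_Ioo) _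

lemma measure_preimage_Ioo_pos_of_map_eq_uniformOnIoo {Ω : Type*} [MeasurableSpace Ω]
    {μ : Measure Ω} {X : Ω → ℝ} {a b c d : ℝ} (hX : Measurable X)
    (hlaw : μ.map X = uniformOnIoo a b) (hac : a ≤ c) (hcd : c < d) (hdb : d ≤ b) :
    0 < μ (X ⁻¹' Ioo c d) := by
  rw [← Measure.map_apply hX measurableSet_Ioo, hlaw, uniformOnIoo, Measure.smul_apply,
    Measure.restrict_apply measurableSet_Ioo, Ioo_inter_Ioo, max_eq_left hac, min_eq_left hdb,
    Real.volume_Ioo, smul_eq_mul]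
  exact ENNReal.mul_pos (ENNReal.inv_ne_zero.2 ENNReal.ofReal_ne_top)
    (ENNReal.ofReal_pos.2 (sub_pos.2 hcd)).ne'

section Freezing

variable {Ω α β γ : Type*} [MeasurableSpace Ω] [MeasurableSpace α] [MeasurableSpace β]
  [MeasurableSpace γ] {μ : Measure Ω} [IsFiniteMeasure μ]

lemma map_prodMk_prodMk_eq_prod_prod {X : Ω → α} {Z : Ω → β} {W : Ω → γ} (hX : Measurable X)
    (hZ : Measurable Z) (hW : Measurable W) (hXZ : IndepFun X Z μ)
    (hXZW : IndepFun (fun ω => (X ω, Z ω)) W μ) :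
    μ.map (fun ω => (X ω, (Z ω, W ω))) = (μ.map X).prod ((μ.map Z).prod (μ.map W)) := by
  have hlaw : μ.map (fun ω => ((X ω, Z ω), W ω)) = ((μ.map X).prod (μ.map Z)).prod (μ.map W) := by
    rw [← (indepFun_iff_map_prod_eq_prod_map_map hX.aemeasurable hZ.aemeasurable).1 hXZ]
    exact (indepFun_iff_map_prod_eq_prod_map_map (hX.prodMk hZ).aemeasurable
      hW.aemeasurable).1 hXZW
  rw [← Measure.prodAssoc_prod, ← hlaw,
    Measure.map_map MeasurableEquiv.prodAssoc.measurable ((hX.prodMk hZ).prodMk hW)]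
  rfl

/-- The freezing lemma. -/
lemma condExp_comp_prodMk_ae_eq_integral [StandardBorelSpace β] [Nonempty β] {X : Ω → α}
    {Z : Ω → β} {ν : Measure β} [IsFiniteMeasure ν] (hX : Measurable X) (hZ : Measurable Z)
    (hlaw : μ.map (fun ω => (X ω, Z ω)) = (μ.map X).prod ν) {f : α × β → ℝ}
    (hf : Integrable f ((μ.map X).prod ν)) :
    μ[fun ω => f (X ω, Z ω) | MeasurableSpace.comap X inferInstance] =ᵐ[μ]
      fun ω => ∫ z, f (X ω, z) ∂ν := by
  have hκ : condDistrib Z X μ =ᵐ[μ.map X] Kernel.const α ν :=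
    condDistrib_ae_eq_of_measure_eq_compProd X hZ.aemeasurable
      (by rw [Measure.compProd_const, hlaw])
  filter_upwards [condExp_prod_ae_eq_integral_condDistrib' hX hZ.aemeasurable (hlaw ▸ hf),
    ae_of_ae_map hX.aemeasurable hκ] with ω hω hκω
  rw [hω, hκω, Kernel.const_apply]

lemma condExp_indicator_le_ae_eq_integral_cdf [StandardBorelSpace β] [Nonempty β] {X : Ω → α}
    {Z : Ω → β} {W : Ω → ℝ} (hX : Measurable X) (hZ : Measurable Z) (hW : Measurable W)
    (hXZ : IndepFun X Z μ) (hXZW : IndepFun (fun ω => (X ω, Z ω)) W μ) {h : α × β → ℝ}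
    (hh : Measurable h) :
    μ[{ω | W ω ≤ h (X ω, Z ω)}.indicator 1 | MeasurableSpace.comap X inferInstance] =ᵐ[μ]
      fun ω => ∫ z, (μ.map W).real (Iic (h (X ω, z))) ∂(μ.map Z) := by
  set S : Set (α × β × ℝ) := {p | p.2.2 ≤ h (p.1, p.2.1)}
  have hS : MeasurableSet S :=
    measurableSet_le (measurable_snd.comp measurable_snd)
      (hh.comp (measurable_fst.prodMk (measurable_fst.comp measurable_snd)))
  have hY : {ω | W ω ≤ h (X ω, Z ω)}.indicator (1 : Ω → ℝ) =
      fun ω => S.indicator 1 (X ω, (Z ω, W ω)) := by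
    ext ω
    simp only [indicator_apply, mem_ofPred_eq, Pi.one_apply, S]
  rw [hY]
  filter_upwards [condExp_comp_prodMk_ae_eq_integral hX (hZ.prodMk hW)
    (map_prodMk_prodMk_eq_prod_prod hX hZ hW hXZ hXZW) (f := S.indicator 1)
    ((integrable_const 1).indicator hS)]
    with ω hω
  rw [hω, integral_prod _ ((integrable_const 1).indicator (measurable_prodMk_left hS))]
  congr 1 with z
  rw [← integral_indicator_one measurableSet_Iic]
  rfl

end Freezing

theorem counterexample_theta_bar_not_sharp_general {Ω : Type*} [MeasurableSpace Ω]
    (μ : Measure Ω) [IsProbabilityMeasure μ]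
    (τ c : ℝ)
    (X1 X2 ξ : Ω → ℝ) (hX1 : Measurable X1) (hX2 : Measurable X2) (hξ : Measurable ξ)
    (hlawX1 : μ.map X1 = uniformOnIoo 0 1)
    (hlawX2 : μ.map X2 = uniformOnIoo (-1) 1)
    (hindep12 : IndepFun X1 X2 μ)
    (hindepξ : IndepFun (fun ω => (X1 ω, X2 ω)) ξ μ)
    -- F_ξ is the cdf of ξ: continuous, strictly increasing, equal to τ + ct on (−1,1]
    (Fξ : ℝ → ℝ)
    (hcdf : ∀ t, (μ {ω | ξ ω ≤ t}).toReal = Fξ t)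
    (hFcont : Continuous Fξ) (hFmono : StrictMono Fξ)
    (hFlin : ∀ t ∈ Ioc (-1:ℝ) 1, Fξ t = τ + c * t)
    -- the binary outcome Y = 1{X₁ + X₂ ≥ ε} with ε = √(1+X₂²)·ξ
    (Y : Ω → ℝ)
    (hY : ∀ ω, Y ω =
      if Real.sqrt (1 + X2 ω ^ 2) * ξ ω ≤ X1 ω + X2 ω then 1 else 0) :
    -- the integral formula for P(Y=1|X₁=s) and its lower bound
    (∀ s : ℝ, 0 ≤ s →
      (∫ u in (-1:ℝ)..1, Fξ ((s + u) / Real.sqrt (1 + u ^ 2))) / 2 ≥ τ) ∧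
    (condExpGiven μ X1 Y =ᵐ[μ] fun ω =>
      (∫ u in (-1:ℝ)..1, Fξ ((X1 ω + u) / Real.sqrt (1 + u ^ 2))) / 2) ∧
    -- b̃ = (1,0) ∈ Θ̄: sgn(X'b̃) = sgn(P(Y=1|X'b̃) − τ) almost surely
    (∀ᵐ ω ∂μ,
      Real.sign (X1 ω) = Real.sign (condExpGiven μ X1 Y ω - τ)) ∧
    -- b̃ ∉ Θ: X'b̃ > 0 while X'β < 0 with positive probability
    (0 < μ {ω | 0 < X1 ω ∧ X1 ω + X2 ω < 0}) := by
  have hprob_zero : condChoiceProb Fξ 0 = τ := condChoiceProb_zero hFlin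
  have hmono := strictMono_condChoiceProb hFcont hFmono
  have hYind : Y = {ω | ξ ω ≤ (X1 ω + X2 ω) / √(1 + X2 ω ^ 2)}.indicator 1 := by
    ext ω
    have hpos : 0 < √(1 + X2 ω ^ 2) := by positivity
    simp only [hY, indicator_apply, mem_ofPred_eq, le_div_iff₀ hpos, mul_comm (ξ ω), Pi.one_apply]
  have hcdf' (t : ℝ) : (μ.map ξ).real (Iic t) = Fξ t := by
    rw [map_measureReal_apply hξ measurableSet_Iic]
    exact hcdf t
  have hcond : condExpGiven μ X1 Y =ᵐ[μ] fun ω => condChoiceProb Fξ (X1 ω) := by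
    filter_upwards [condExp_indicator_le_ae_eq_integral_cdf hX1 hX2 hξ hindep12 hindepξ
      (h := fun p => (p.1 + p.2) / √(1 + p.2 ^ 2)) (by fun_prop)] with ω hω
    rw [condExpGiven, hYind, hω, hlawX2, integral_uniformOnIoo (by norm_num)]
    simp only [hcdf', condChoiceProb]
    norm_num
  refine ⟨fun s hs => hprob_zero ▸ hmono.monotone hs, hcond, ?_, ?_⟩
  · filter_upwards [ae_mem_Ioo_of_map_eq_uniformOnIoo hX1 hlawX1, hcond] with ω hX1ω hω
    rw [hω, Real.sign_of_pos hX1ω.1, Real.sign_of_pos (sub_pos.2 (hprob_zero ▸ hmono hX1ω.1))]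
  · calc 0 < μ (X1 ⁻¹' Ioo 0 (1 / 2)) * μ (X2 ⁻¹' Ioo (-1) (-1 / 2)) :=
          ENNReal.mul_pos
            (measure_preimage_Ioo_pos_of_map_eq_uniformOnIoo hX1 hlawX1 le_rfl (by norm_num)
              (by norm_num)).ne'
            (measure_preimage_Ioo_pos_of_map_eq_uniformOnIoo hX2 hlawX2 le_rfl (by norm_num)
              (by norm_num)).ne'
      _ = μ (X1 ⁻¹' Ioo 0 (1 / 2) ∩ X2 ⁻¹' Ioo (-1) (-1 / 2)) :=
          (hindep12.measure_inter_preimage_eq_mul _ _ measurableSet_Ioo measurableSet_Ioo).symm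
      _ ≤ μ {ω | 0 < X1 ω ∧ X1 ω + X2 ω < 0} :=
          measure_mono fun ω ⟨⟨h0, h1⟩, _, h2⟩ => ⟨h0, by linarith⟩

/-- In the counterexample with `X₁ ~ U(0,1) ⊥ X₂ ~ U(−1,1)`, `β = (1,1)`,
`ε = √(1+X₂²)·ξ`, `ξ ⊥ X` with cdf `F_ξ` equal to `τ + ct` on `(−1,1]`:
for every `s ≥ 0`, `P(Y=1|X₁=s) = ∫_{−1}^{1} F_ξ((1+u²)^{−1/2}(s+u)) du / 2 ≥ τ`.
In particular `b̃ = (1,0)` satisfies `sgn(X'b̃) = sgn(P(Y=1|X'b̃) − τ)` a.s. (so `b̃ ∈ Θ̄`)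
even though `P(X'b̃ > 0 and X'β < 0) > 0` (so `b̃ ∉ Θ`). -/
theorem counterexample_theta_bar_not_sharp {Ω : Type*} [MeasurableSpace Ω]
    (μ : Measure Ω) [IsProbabilityMeasure μ]
    (τ c : ℝ) (hτ : τ ∈ Ioo (0:ℝ) 1) (hc : c ∈ Ioo (0:ℝ) (min τ (1 - τ)))
    (X1 X2 ξ : Ω → ℝ) (hX1 : Measurable X1) (hX2 : Measurable X2) (hξ : Measurable ξ)
    (hlawX1 : μ.map X1 = uniformOnIoo 0 1)
    (hlawX2 : μ.map X2 = uniformOnIoo (-1) 1)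
    (hindep12 : IndepFun X1 X2 μ)
    (hindepξ : IndepFun (fun ω => (X1 ω, X2 ω)) ξ μ)
    -- F_ξ is the cdf of ξ: continuous, strictly increasing, equal to τ + ct on (−1,1]
    (Fξ : ℝ → ℝ)
    (hcdf : ∀ t, (μ {ω | ξ ω ≤ t}).toReal = Fξ t)
    (hFcont : Continuous Fξ) (hFmono : StrictMono Fξ)
    (hFlin : ∀ t ∈ Ioc (-1:ℝ) 1, Fξ t = τ + c * t)
    -- the binary outcome Y = 1{X₁ + X₂ ≥ ε} with ε = √(1+X₂²)·ξ
    (Y : Ω → ℝ)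
    (hY : ∀ ω, Y ω =
      if Real.sqrt (1 + X2 ω ^ 2) * ξ ω ≤ X1 ω + X2 ω then 1 else 0) :
    -- the integral formula for P(Y=1|X₁=s) and its lower bound
    (∀ s : ℝ, 0 ≤ s →
      (∫ u in (-1:ℝ)..1, Fξ ((s + u) / Real.sqrt (1 + u ^ 2))) / 2 ≥ τ) ∧
    (condExpGiven μ X1 Y =ᵐ[μ] fun ω =>
      (∫ u in (-1:ℝ)..1, Fξ ((X1 ω + u) / Real.sqrt (1 + u ^ 2))) / 2) ∧
    -- b̃ = (1,0) ∈ Θ̄: sgn(X'b̃) = sgn(P(Y=1|X'b̃) − τ) almost surely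
    (∀ᵐ ω ∂μ,
      Real.sign (X1 ω) = Real.sign (condExpGiven μ X1 Y ω - τ)) ∧
    -- b̃ ∉ Θ: X'b̃ > 0 while X'β < 0 with positive probability
    (0 < μ {ω | 0 < X1 ω ∧ X1 ω + X2 ω < 0}) :=
  counterexample_theta_bar_not_sharp_general μ τ c X1 X2 ξ hX1 hX2 hξ hlawX1 hlawX2 hindep12 hindepξ
    Fξ hcdf hFcont hFmono hFlin Y hY
end

section
/- In the ordered choice model with K+1 alternatives where the agent chooses c iff λ_{c−1} < X'θ + ε ≤ λ_c, under the quantile independence condition Q_τ(ε|X=x) = 0 with positive density near 0, for each cutoff c ∈ {1,…,K}: P(Y ≤ c | X = x) > τ ⟺ λ_c − x'θ > 0, with equality and reversed-inequality analogues. Equivalently, the sign restriction of Assumption 1 holds with H(Y,c) = 1{Y ≤ c} − τ and G(X,c,b) = X̃_c'b where X̃_c = (−X', l_c')' and b = (θ,λ). -/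
open Set

/-- In the ordered choice model with `K+1` alternatives where the agent
chooses `c` iff `λ_{c−1} < X'θ + ε ≤ λ_c`, under the quantile independence condition
`Q_τ(ε|X=x) = 0` with positive conditional density near `0`, for each cutoff `c`:
`P(Y ≤ c | X = x) > τ ↔ λ_c − x'θ > 0`, with equality and reversed-inequality analogues.
This is the sign restriction with `H(Y,c) = 1{Y ≤ c} − τ` and `G(X,c,b) = X̃_c'b` where
`X̃_c'β = λ_c − X'θ`. Note `P(Y ≤ c|X=x) = P(ε ≤ λ_c − x'θ|X=x) = F x (λ_c − x'θ)`. -/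
theorem ordered_choice_sign_equivalences {d K : ℕ} (τ : ℝ) (hτ : τ ∈ Ioo (0:ℝ) 1)
    (ΓX : Set (Fin d → ℝ)) (θ : Fin d → ℝ)
    -- strictly increasing threshold parameters λ₁ < … < λ_K
    (lam : Fin K → ℝ) (hlam : StrictMono lam)
    -- `F x` is the cdf of `ε` conditional on `X = x`
    (F : (Fin d → ℝ) → ℝ → ℝ)
    (hFmono : ∀ x ∈ ΓX, Monotone (F x))
    (δ : ℝ) (hδ : 0 < δ)
    (hFstrict : ∀ x ∈ ΓX, StrictMonoOn (F x) (Ioo (-δ) δ))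
    -- quantile independence: Q_τ(ε|X=x) = 0
    (hquant : ∀ x ∈ ΓX, F x 0 = τ)
    -- P(Y ≤ c | X = x) = P(ε ≤ λ_c − x'θ | X = x)
    (PYle : (Fin d → ℝ) → Fin K → ℝ)
    (hPYle : ∀ x ∈ ΓX, ∀ c : Fin K, PYle x c = F x (lam c - ∑ i, x i * θ i)) :
    ∀ x ∈ ΓX, ∀ c : Fin K,
      (PYle x c > τ ↔ lam c - ∑ i, x i * θ i > 0) ∧
      (PYle x c = τ ↔ lam c - ∑ i, x i * θ i = 0) ∧
      (PYle x c < τ ↔ lam c - ∑ i, x i * θ i < 0) := by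
  intro x hx c
  set t := lam c - ∑ i, x i * θ i with ht
  have h0mem : (0:ℝ) ∈ Ioo (-δ) δ := ⟨by linarith, hδ⟩
  have hpos : t > 0 → F x t > τ := by
    intro htpos
    have hs : min t (δ/2) ∈ Ioo (-δ) δ :=
      ⟨lt_min (by linarith) (by linarith), (min_le_right _ _).trans_lt (by linarith)⟩
    have h1 : F x 0 < F x (min t (δ/2)) :=
      hFstrict x hx h0mem hs (lt_min htpos (by linarith))
    have h2 : F x (min t (δ/2)) ≤ F x t := hFmono x hx (min_le_left _ _)
    have := hquant x hx
    linarith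
  have hneg : t < 0 → F x t < τ := by
    intro htneg
    have hs : max t (-(δ/2)) ∈ Ioo (-δ) δ :=
      ⟨lt_max_of_lt_right (by linarith), max_lt (by linarith) (by linarith)⟩
    have h1 : F x (max t (-(δ/2))) < F x 0 :=
      hFstrict x hx hs h0mem (max_lt htneg (by linarith))
    have h2 : F x t ≤ F x (max t (-(δ/2))) := hFmono x hx (le_max_left _ _)
    have := hquant x hx
    linarith
  have hzero : t = 0 → F x t = τ := fun h => h ▸ hquant x hx
  have hP : PYle x c = F x t := hPYle x hx c
  rw [hP]
  rcases lt_trichotomy t 0 with h | h | h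
  · have := hneg h
    refine ⟨⟨fun hc => absurd hc (by linarith), fun hc => absurd hc (by linarith)⟩,
      ⟨fun hc => absurd hc (by linarith), fun hc => absurd hc (by linarith)⟩,
      ⟨fun _ => h, fun _ => this⟩⟩
  · have := hzero h
    refine ⟨⟨fun hc => absurd hc (by linarith), fun hc => absurd hc (by linarith)⟩,
      ⟨fun _ => h, fun _ => this⟩,
      ⟨fun hc => absurd hc (by linarith), fun hc => absurd hc (by linarith)⟩⟩
  · have := hpos h
    refine ⟨⟨fun _ => h, fun _ => this⟩,
      ⟨fun hc => absurd hc (by linarith), fun hc => absurd hc (by linarith)⟩,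
      ⟨fun hc => absurd hc (by linarith), fun hc => absurd hc (by linarith)⟩⟩
end

section
/- In the binary choice panel data model Y_t = 1{X_t'β + v ≥ ε_t}, if the distribution of ε_t conditional on (X,v) is time-invariant with everywhere positive density, then for any two periods s < t: (X_s − X_t)'β > 0 ⟺ E(Y_s − Y_t | X) > 0, with equality and negative analogues (i.e., sgn((X_s−X_t)'β) = sgn(E(Y_s − Y_t|X)) almost surely). -/
/-!
Write `W = (X, v)`, `aᵤ = Xᵤ'β + v` and `δ = (X_s − X_t)'β = a_s − a_t`. Since the conditional cdfs
of `ε_s` and `ε_t` given `W` coincide, so do the joint laws `ν` of `(W, ε_s)` and `(W, ε_t)`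
(they agree on the rectangles `S × (-∞, r]`). Hence, on an event `{X ∈ S}` on which `δ` has a
constant sign, `∫ (Y_s − Y_t)` is `±ν` of the region between the graphs of `a_t` and `a_s`, or `0`.
Strict monotonicity of the conditional cdf makes that region non-null as soon as `{X ∈ S}` is, by
covering it with rectangles with rational sides; and a conditional expectation given `X` whose
integrals over such events carry the sign of `δ` has the sign of `δ` almost everywhere.
-/

open MeasureTheory Set

section CondExp

variable {Ω : Type*} {m m₀ : MeasurableSpace Ω} {μ : Measure[m₀] Ω} {f : Ω → ℝ} {A : Set Ω}

theorem ae_pos_condExp_of_forall_setIntegral_pos (hm : m ≤ m₀) [SigmaFinite (μ.trim hm)]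
    (hf : Integrable f μ) (hA : MeasurableSet[m] A)
    (h : ∀ B, MeasurableSet[m] B → B ⊆ A → μ B ≠ 0 → 0 < ∫ ω in B, f ω ∂μ) :
    ∀ᵐ ω ∂μ, ω ∈ A → 0 < μ[f | m] ω := by
  have hB : MeasurableSet[m] (A ∩ {ω | μ[f | m] ω ≤ 0}) :=
    hA.inter (measurableSet_le stronglyMeasurable_condExp.measurable measurable_const)
  have hnull : μ (A ∩ {ω | μ[f | m] ω ≤ 0}) = 0 := by
    by_contra hne
    have hle : ∫ ω in A ∩ {ω | μ[f | m] ω ≤ 0}, μ[f | m] ω ∂μ ≤ 0 :=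
      setIntegral_nonpos (hm _ hB) fun ω hω => hω.2
    rw [setIntegral_condExp hm hf hB] at hle
    exact (h _ hB inter_subset_left hne).not_ge hle
  filter_upwards [measure_eq_zero_iff_ae_notMem.mp hnull] with ω hω hωA
  exact not_le.mp fun hle => hω ⟨hωA, hle⟩

theorem ae_eq_zero_condExp_of_forall_setIntegral_eq_zero (hm : m ≤ m₀) [SigmaFinite (μ.trim hm)]
    (hf : Integrable f μ) (hA : MeasurableSet[m] A)
    (h : ∀ B, MeasurableSet[m] B → B ⊆ A → ∫ ω in B, f ω ∂μ = 0) :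
    ∀ᵐ ω ∂μ, ω ∈ A → μ[f | m] ω = 0 := by
  have hzero : (0 : Ω → ℝ) =ᵐ[μ] μ[A.indicator f | m] := by
    refine ae_eq_condExp_of_forall_setIntegral_eq hm (hf.indicator (hm _ hA))
      (fun _ _ _ => integrableOn_zero) (fun B hB _ => ?_) aestronglyMeasurable_zero
    rw [integral_indicator (hm _ hA), Measure.restrict_restrict (hm _ hA),
      h _ (hA.inter hB) inter_subset_left, Pi.zero_def, integral_zero]
  filter_upwards [hzero, condExp_indicator hf hA] with ω h0 hind hωA
  rw [← indicator_of_mem hωA (μ[f | m]), ← hind, ← h0, Pi.zero_apply]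

end CondExp

theorem exists_measurableSet_preimage_eq_of_subset {Ω 𝓩 : Type*} [MeasurableSpace 𝓩]
    {Z : Ω → 𝓩} {δ : 𝓩 → ℝ} (hδ : Measurable δ) {T : Set ℝ} (hT : MeasurableSet T) {B : Set Ω}
    (hB : MeasurableSet[MeasurableSpace.comap Z inferInstance] B) (hBT : B ⊆ (δ ∘ Z) ⁻¹' T) :
    ∃ S, MeasurableSet S ∧ S ⊆ δ ⁻¹' T ∧ Z ⁻¹' S = B := by
  obtain ⟨S, hS, rfl⟩ := hB
  exact ⟨S ∩ δ ⁻¹' T, hS.inter (hδ hT), inter_subset_right,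
    by rw [preimage_inter]; exact inter_eq_left.mpr hBT⟩

section Sign

variable {Ω 𝓩 : Type*} [MeasurableSpace Ω] [MeasurableSpace 𝓩] {μ : Measure Ω} [IsFiniteMeasure μ]

theorem ae_sign_eq_sign_condExpGiven {Z : Ω → 𝓩} (hZ : Measurable Z) {δ : 𝓩 → ℝ}
    (hδ : Measurable δ) {f : Ω → ℝ} (hf : Integrable f μ)
    (hpos : ∀ S, MeasurableSet S → S ⊆ δ ⁻¹' Ioi 0 → μ (Z ⁻¹' S) ≠ 0 →
      0 < ∫ ω in Z ⁻¹' S, f ω ∂μ)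
    (hneg : ∀ S, MeasurableSet S → S ⊆ δ ⁻¹' Iio 0 → μ (Z ⁻¹' S) ≠ 0 →
      ∫ ω in Z ⁻¹' S, f ω ∂μ < 0)
    (hzero : ∀ S, MeasurableSet S → S ⊆ δ ⁻¹' {0} → ∫ ω in Z ⁻¹' S, f ω ∂μ = 0) :
    ∀ᵐ ω ∂μ, Real.sign (δ (Z ω)) = Real.sign (condExpGiven μ Z f ω) := by
  have hm := hZ.comap_le
  have hlevel : ∀ T, MeasurableSet T →
      MeasurableSet[MeasurableSpace.comap Z inferInstance] ((δ ∘ Z) ⁻¹' T) :=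
    fun T hT => ⟨δ ⁻¹' T, hδ hT, rfl⟩
  have h_pos := ae_pos_condExp_of_forall_setIntegral_pos hm hf (hlevel (Ioi 0) measurableSet_Ioi)
    fun B hB hBT hμB => by
      obtain ⟨S, hS, hSδ, rfl⟩ :=
        exists_measurableSet_preimage_eq_of_subset hδ measurableSet_Ioi hB hBT
      exact hpos S hS hSδ hμB
  have h_neg :=
    ae_pos_condExp_of_forall_setIntegral_pos hm hf.neg (hlevel (Iio 0) measurableSet_Iio)
    fun B hB hBT hμB => by
      obtain ⟨S, hS, hSδ, rfl⟩ :=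
        exists_measurableSet_preimage_eq_of_subset hδ measurableSet_Iio hB hBT
      simp only [Pi.neg_apply, integral_neg, neg_pos]
      exact hneg S hS hSδ hμB
  have h_zero := ae_eq_zero_condExp_of_forall_setIntegral_eq_zero hm hf
    (hlevel _ (measurableSet_singleton 0)) fun B hB hBT => by
      obtain ⟨S, hS, hSδ, rfl⟩ :=
        exists_measurableSet_preimage_eq_of_subset hδ (measurableSet_singleton 0) hB hBT
      exact hzero S hS hSδ
  filter_upwards [h_pos, h_neg, h_zero, condExp_neg f (MeasurableSpace.comap Z inferInstance)]
    with ω hp hn hz hneg_eq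
  unfold condExpGiven
  rcases lt_trichotomy (δ (Z ω)) 0 with h | h | h
  · have := hn h
    rw [hneg_eq, Pi.neg_apply, neg_pos] at this
    rw [Real.sign_of_neg h, Real.sign_of_neg this]
  · rw [h, hz h, Real.sign_zero]
  · rw [Real.sign_of_pos h, Real.sign_of_pos (hp h)]

end Sign

def ChargesIntervalsFiberwise {𝓦 : Type*} [MeasurableSpace 𝓦] (ν : Measure (𝓦 × ℝ)) : Prop :=
  ∀ S, MeasurableSet S → ν (S ×ˢ univ) ≠ 0 → ∀ p q : ℝ, p < q → ν (S ×ˢ Ioc p q) ≠ 0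

theorem ChargesIntervalsFiberwise.measure_setOf_mem_Ioc_ne_zero {𝓦 : Type*} [MeasurableSpace 𝓦]
    {ν : Measure (𝓦 × ℝ)} (hν : ChargesIntervalsFiberwise ν) {h₁ h₂ : 𝓦 → ℝ}
    (hh₁ : Measurable h₁) (hh₂ : Measurable h₂) {S : Set 𝓦} (hS : MeasurableSet S)
    (hlt : ∀ w ∈ S, h₁ w < h₂ w) (hSν : ν (S ×ˢ univ) ≠ 0) :
    ν {x | x.1 ∈ S ∧ x.2 ∈ Ioc (h₁ x.1) (h₂ x.1)} ≠ 0 := by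
  let C : ℚ × ℚ → Set 𝓦 := fun pq => {w ∈ S | h₁ w ≤ pq.1 ∧ (pq.1 : ℝ) < pq.2 ∧ pq.2 ≤ h₂ w}
  have hcover : S = ⋃ pq, C pq := by
    refine Subset.antisymm (fun w hw => ?_) (iUnion_subset fun _ => sep_subset _ _)
    obtain ⟨p, hp₁, hp₂⟩ := exists_rat_btwn (hlt w hw)
    obtain ⟨q, hq₁, hq₂⟩ := exists_rat_btwn hp₂
    exact mem_iUnion.mpr ⟨(p, q), hw, hp₁.le, hq₁, hq₂.le⟩
  rw [hcover, iUnion_prod_const, Ne, measure_iUnion_null_iff, not_forall] at hSν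
  obtain ⟨⟨p, q⟩, hpq⟩ := hSν
  have hC : MeasurableSet (C (p, q)) :=
    hS.inter ((measurableSet_le hh₁ measurable_const).inter
      ((MeasurableSet.const _).inter (measurableSet_le measurable_const hh₂)))
  obtain ⟨⟨w, y⟩, hw, -⟩ := nonempty_of_measure_ne_zero hpq
  refine fun h0 => hν _ hC hpq p q hw.2.2.1 (measure_mono_null ?_ h0)
  rintro ⟨w, y⟩ ⟨hw, hy⟩
  exact ⟨hw.1, hw.2.1.trans_lt hy.1, hy.2.trans hw.2.2.2⟩

section JointLaw

variable {Ω 𝓦 : Type*} [MeasurableSpace Ω] [MeasurableSpace 𝓦] {μ : Measure Ω}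
  {W : Ω → 𝓦} {e e₁ e₂ : Ω → ℝ}

theorem setIntegral_ite_le_eq_measureReal {A : Set Ω} (he : Measurable e)
    {a : Ω → ℝ} (ha : Measurable a) :
    ∫ ω in A, (if e ω ≤ a ω then (1 : ℝ) else 0) ∂μ = μ.real (A ∩ {ω | e ω ≤ a ω}) := by
  have hle : MeasurableSet {ω | e ω ≤ a ω} := measurableSet_le he ha
  have hind : (fun ω => if e ω ≤ a ω then (1 : ℝ) else 0) = {ω | e ω ≤ a ω}.indicator 1 := by
    ext ω; simp [indicator_apply]
  rw [hind, integral_indicator_one hle, measureReal_restrict_apply hle, inter_comm]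

theorem setIntegral_ite_le_comp_eq_measureReal_map (hW : Measurable W) (he : Measurable e)
    {h : 𝓦 → ℝ} (hh : Measurable h) {S : Set 𝓦} (hS : MeasurableSet S) :
    ∫ ω in W ⁻¹' S, (if e ω ≤ h (W ω) then (1 : ℝ) else 0) ∂μ =
      (μ.map fun ω => (W ω, e ω)).real {x | x.1 ∈ S ∧ x.2 ≤ h x.1} := by
  have hregion : MeasurableSet {x : 𝓦 × ℝ | x.1 ∈ S ∧ x.2 ≤ h x.1} :=
    (measurable_fst hS).inter (measurableSet_le measurable_snd (hh.comp measurable_fst))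
  rw [setIntegral_ite_le_eq_measureReal (a := fun ω => h (W ω)) he (hh.comp hW),
    map_measureReal_apply (hW.prodMk he) hregion]
  rfl

variable [IsFiniteMeasure μ]

theorem integrable_ite_le (he : Measurable e) {a : Ω → ℝ} (ha : Measurable a) :
    Integrable (fun ω => if e ω ≤ a ω then (1 : ℝ) else 0) μ :=
  (integrable_const 1).mono' (Measurable.ite (measurableSet_le he ha) measurable_const
    measurable_const).aestronglyMeasurable (.of_forall fun ω => by split_ifs <;> simp)

theorem measureReal_preimage_inter_le_eq_setIntegral (hW : Measurable W) (he : Measurable e)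
    {r : ℝ} {g : Ω → ℝ} (hg : condExpGiven μ W (fun ω => if e ω ≤ r then 1 else 0) =ᵐ[μ] g)
    {S : Set 𝓦} (hS : MeasurableSet S) :
    μ.real (W ⁻¹' S ∩ {ω | e ω ≤ r}) = ∫ ω in W ⁻¹' S, g ω ∂μ := by
  rw [← integral_congr_ae (ae_restrict_of_ae hg), condExpGiven,
    setIntegral_condExp hW.comap_le (integrable_ite_le he measurable_const) ⟨S, hS, rfl⟩,
    setIntegral_ite_le_eq_measureReal he measurable_const]

theorem map_prodMk_eq_of_condExpGiven_eq (hW : Measurable W) (he₁ : Measurable e₁)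
    (he₂ : Measurable e₂)
    (h : ∀ r : ℝ, condExpGiven μ W (fun ω => if e₁ ω ≤ r then 1 else 0) =ᵐ[μ]
      condExpGiven μ W (fun ω => if e₂ ω ≤ r then 1 else 0)) :
    μ.map (fun ω => (W ω, e₁ ω)) = μ.map (fun ω => (W ω, e₂ ω)) := by
  have hslice : ∀ e, Measurable e → ∀ {S : Set 𝓦} {A : Set ℝ}, MeasurableSet S → MeasurableSet A →
      μ.map (fun ω => (W ω, e ω)) (S ×ˢ A) = (μ.restrict (W ⁻¹' S)).map e A := by
    intro e he S A hS hA
    rw [Measure.map_apply (hW.prodMk he) (hS.prod hA), Measure.map_apply he hA,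
      Measure.restrict_apply (he hA), mk_preimage_prod, inter_comm]
  refine Measure.ext_prod fun {S A} hS hA => ?_
  rw [hslice e₁ he₁ hS hA, hslice e₂ he₂ hS hA]
  congr 1
  refine Measure.ext_of_Iic _ _ fun r => ?_
  rw [Measure.map_apply he₁ measurableSet_Iic, Measure.map_apply he₂ measurableSet_Iic,
    Measure.restrict_apply (he₁ measurableSet_Iic), Measure.restrict_apply (he₂ measurableSet_Iic),
    ← measureReal_eq_measureReal_iff, inter_comm, inter_comm _ (W ⁻¹' S)]
  exact (measureReal_preimage_inter_le_eq_setIntegral hW he₁ (h r) hS).trans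
    (measureReal_preimage_inter_le_eq_setIntegral hW he₂ .rfl hS).symm

theorem chargesIntervalsFiberwise_map_prodMk (hW : Measurable W) (he : Measurable e)
    {G : ℝ → Ω → ℝ} (hG : ∀ r, condExpGiven μ W (fun ω => if e ω ≤ r then 1 else 0) =ᵐ[μ] G r)
    (hG_mono : ∀ ω, StrictMono (G · ω)) :
    ChargesIntervalsFiberwise (μ.map fun ω => (W ω, e ω)) := by
  intro S hS hSμ p q hpq
  rw [Measure.map_apply (hW.prodMk he) (hS.prod .univ), mk_preimage_prod, preimage_univ,
    inter_univ] at hSμ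
  rw [Measure.map_apply (hW.prodMk he) (hS.prod measurableSet_Ioc), mk_preimage_prod]
  have hIoc : e ⁻¹' Ioc p q = {ω | e ω ≤ q} \ {ω | e ω ≤ p} := by
    ext ω; simp [and_comm]
  have hGint : ∀ r, Integrable (G r) μ := fun r => integrable_condExp.congr (hG r)
  have hsub : W ⁻¹' S ∩ {ω | e ω ≤ p} ⊆ W ⁻¹' S ∩ {ω | e ω ≤ q} :=
    inter_subset_inter_right _ fun ω (h : e ω ≤ p) => h.trans hpq.le
  have hreal : μ.real (W ⁻¹' S ∩ e ⁻¹' Ioc p q) = ∫ ω in W ⁻¹' S, (G q ω - G p ω) ∂μ := by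
    rw [hIoc, inter_sdiff_distrib_left,
      measureReal_sdiff hsub ((hW hS).inter (measurableSet_le he measurable_const)),
      measureReal_preimage_inter_le_eq_setIntegral hW he (hG q) hS,
      measureReal_preimage_inter_le_eq_setIntegral hW he (hG p) hS,
      integral_sub (hGint q).integrableOn (hGint p).integrableOn]
  have hpos : 0 < ∫ ω in W ⁻¹' S, (G q ω - G p ω) ∂μ := by
    have hGpos : ∀ ω, 0 < G q ω - G p ω := fun ω => sub_pos.mpr (hG_mono ω hpq)
    rw [integral_pos_iff_support_of_nonneg (fun ω => (hGpos ω).le)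
      ((hGint q).sub (hGint p)).integrableOn]
    simp [Function.support, (hGpos _).ne', pos_iff_ne_zero, hSμ]
  exact fun h0 => (hreal ▸ hpos).ne' (by simp [measureReal_def, h0])

variable {h₁ h₂ : 𝓦 → ℝ} {S : Set 𝓦}

theorem setIntegral_ite_sub_ite_eq (hW : Measurable W) (he₁ : Measurable e₁)
    (he₂ : Measurable e₂) (hh₁ : Measurable h₁) (hh₂ : Measurable h₂) (hS : MeasurableSet S) :
    ∫ ω in W ⁻¹' S,
      ((if e₁ ω ≤ h₁ (W ω) then (1 : ℝ) else 0) - (if e₂ ω ≤ h₂ (W ω) then 1 else 0)) ∂μ =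
      (μ.map fun ω => (W ω, e₁ ω)).real {x | x.1 ∈ S ∧ x.2 ≤ h₁ x.1} -
        (μ.map fun ω => (W ω, e₂ ω)).real {x | x.1 ∈ S ∧ x.2 ≤ h₂ x.1} := by
  rw [integral_sub (integrable_ite_le (a := fun ω => h₁ (W ω)) he₁ (hh₁.comp hW)).integrableOn
      (integrable_ite_le (a := fun ω => h₂ (W ω)) he₂ (hh₂.comp hW)).integrableOn,
    setIntegral_ite_le_comp_eq_measureReal_map hW he₁ hh₁ hS,
    setIntegral_ite_le_comp_eq_measureReal_map hW he₂ hh₂ hS]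

theorem setIntegral_ite_sub_ite_pos (hW : Measurable W) (he₁ : Measurable e₁)
    (he₂ : Measurable e₂)
    (hlaw : μ.map (fun ω => (W ω, e₁ ω)) = μ.map (fun ω => (W ω, e₂ ω)))
    (hν : ChargesIntervalsFiberwise (μ.map fun ω => (W ω, e₁ ω)))
    (hh₁ : Measurable h₁) (hh₂ : Measurable h₂) (hS : MeasurableSet S)
    (hlt : ∀ w ∈ S, h₂ w < h₁ w) (hSμ : μ (W ⁻¹' S) ≠ 0) :
    0 < ∫ ω in W ⁻¹' S,
      ((if e₁ ω ≤ h₁ (W ω) then (1 : ℝ) else 0) - (if e₂ ω ≤ h₂ (W ω) then 1 else 0)) ∂μ := by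
  have hsub : {x : 𝓦 × ℝ | x.1 ∈ S ∧ x.2 ≤ h₂ x.1} ⊆ {x | x.1 ∈ S ∧ x.2 ≤ h₁ x.1} :=
    fun x hx => ⟨hx.1, hx.2.trans (hlt _ hx.1).le⟩
  have hdiff : {x : 𝓦 × ℝ | x.1 ∈ S ∧ x.2 ≤ h₁ x.1} \ {x | x.1 ∈ S ∧ x.2 ≤ h₂ x.1} =
      {x | x.1 ∈ S ∧ x.2 ∈ Ioc (h₂ x.1) (h₁ x.1)} := by
    ext x
    simp only [mem_sdiff, mem_ofPred_eq, mem_Ioc, not_and, not_le]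
    exact ⟨fun ⟨⟨hx, h₁x⟩, h₂x⟩ => ⟨hx, h₂x hx, h₁x⟩,
      fun ⟨hx, h₂x, h₁x⟩ => ⟨⟨hx, h₁x⟩, fun _ => h₂x⟩⟩
  have hSν : μ.map (fun ω => (W ω, e₁ ω)) (S ×ˢ univ) ≠ 0 := by
    rwa [Measure.map_apply (hW.prodMk he₁) (hS.prod .univ), mk_preimage_prod, preimage_univ,
      inter_univ]
  rw [setIntegral_ite_sub_ite_eq hW he₁ he₂ hh₁ hh₂ hS, ← hlaw, ← measureReal_sdiff hsub
    ((measurable_fst hS).inter (measurableSet_le measurable_snd (hh₂.comp measurable_fst))), hdiff]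
  exact ENNReal.toReal_pos (hν.measure_setOf_mem_Ioc_ne_zero hh₂ hh₁ hS hlt hSν)
    (measure_ne_top _ _)

theorem setIntegral_ite_sub_ite_eq_zero (hW : Measurable W) (he₁ : Measurable e₁)
    (he₂ : Measurable e₂)
    (hlaw : μ.map (fun ω => (W ω, e₁ ω)) = μ.map (fun ω => (W ω, e₂ ω)))
    (hh₁ : Measurable h₁) (hh₂ : Measurable h₂) (hS : MeasurableSet S)
    (heq : ∀ w ∈ S, h₁ w = h₂ w) :
    ∫ ω in W ⁻¹' S,
      ((if e₁ ω ≤ h₁ (W ω) then (1 : ℝ) else 0) - (if e₂ ω ≤ h₂ (W ω) then 1 else 0)) ∂μ = 0 := by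
  have hregion : {x : 𝓦 × ℝ | x.1 ∈ S ∧ x.2 ≤ h₁ x.1} = {x | x.1 ∈ S ∧ x.2 ≤ h₂ x.1} := by
    ext x
    exact and_congr_right fun hx => by rw [heq _ hx]
  rw [setIntegral_ite_sub_ite_eq hW he₁ he₂ hh₁ hh₂ hS, hlaw, hregion, sub_self]

end JointLaw

/-- In the binary choice panel data model `Y_t = 1{X_t'β + v ≥ ε_t}`, if the
distribution of `ε_t` conditional on `(X,v)` is time invariant with everywhere positive
density (so its cdf `F` is strictly increasing and common across periods), then for any two
periods `s < t`: `sgn((X_s − X_t)'β) = sgn(E(Y_s − Y_t | X))` almost surely. -/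
theorem panel_binary_sign_equivalence {q T : ℕ} {Ω : Type*} [MeasurableSpace Ω]
    (μ : Measure Ω) [IsProbabilityMeasure μ]
    (X : Ω → Fin T → Fin q → ℝ) (hX : Measurable X)
    (v : Ω → ℝ) (hv : Measurable v)
    (ε : Fin T → Ω → ℝ) (hε : ∀ t, Measurable (ε t))
    (β : Fin q → ℝ)
    -- the binary outcomes Y_t = 1{X_t'β + v ≥ ε_t}
    (Y : Fin T → Ω → ℝ)
    (hY : ∀ t ω, Y t ω = if ε t ω ≤ (∑ i, X ω t i * β i) + v ω then 1 else 0)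
    -- `F x w` is the common (time-invariant) cdf of `ε_t` conditional on `(X,v) = (x,w)`
    (F : (Fin T → Fin q → ℝ) → ℝ → ℝ → ℝ)
    -- everywhere positive conditional density: F is strictly increasing
    (hFstrict : ∀ x w, StrictMono (F x w))
    -- conditional cdf identity, the same F for every period t (time invariance)
    (hcdf : ∀ (t : Fin T) (r : ℝ),
      condExpGiven μ (fun ω => (X ω, v ω)) (fun ω => if ε t ω ≤ r then 1 else 0)
        =ᵐ[μ] fun ω => F (X ω) (v ω) r) :
    ∀ s t : Fin T, s < t →
      ∀ᵐ ω ∂μ,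
        Real.sign (∑ i, (X ω s i - X ω t i) * β i) =
          Real.sign (condExpGiven μ X (fun ω' => Y s ω' - Y t ω') ω) := by
  intro s t _
  have hW : Measurable fun ω => (X ω, v ω) := hX.prodMk hv
  let index (u : Fin T) (w : (Fin T → Fin q → ℝ) × ℝ) : ℝ := ∑ i, w.1 u i * β i + w.2
  have hindex : ∀ u, Measurable (index u) := fun u => by fun_prop
  have hδ : ∀ w, ∑ i, (w.1 s i - w.1 t i) * β i = index s w - index t w := fun w => by
    simp only [index, sub_mul, Finset.sum_sub_distrib]; ring
  have hlaw := map_prodMk_eq_of_condExpGiven_eq hW (hε s) (hε t)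
    fun r => (hcdf s r).trans (hcdf t r).symm
  have hν : ∀ u, ChargesIntervalsFiberwise (μ.map fun ω => ((X ω, v ω), ε u ω)) := fun u =>
    chargesIntervalsFiberwise_map_prodMk hW (hε u) (hcdf u) fun ω => hFstrict (X ω) (v ω)
  have hYdiff : (fun ω => Y s ω - Y t ω) = fun ω =>
      (if ε s ω ≤ index s (X ω, v ω) then (1 : ℝ) else 0) -
        (if ε t ω ≤ index t (X ω, v ω) then 1 else 0) :=
    funext fun ω => by rw [hY, hY]
  rw [hYdiff]
  refine ae_sign_eq_sign_condExpGiven hX (δ := fun x => ∑ i, (x s i - x t i) * β i) (by fun_prop)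
    ((integrable_ite_le (hε s) ((hindex s).comp hW)).sub
      (integrable_ite_le (hε t) ((hindex t).comp hW))) ?_ ?_ ?_
  · intro S hS hSδ hSμ
    exact setIntegral_ite_sub_ite_pos hW (hε s) (hε t) hlaw (hν s) (hindex s) (hindex t)
      (measurable_fst hS) (fun w hw => sub_pos.mp (hδ w ▸ hSδ hw)) hSμ
  · intro S hS hSδ hSμ
    have := setIntegral_ite_sub_ite_pos hW (hε t) (hε s) hlaw.symm (hν t) (hindex t) (hindex s)
      (measurable_fst hS) (fun w hw => sub_neg.mp (hδ w ▸ hSδ hw)) hSμ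
    rw [← neg_pos, ← integral_neg]
    simp only [neg_sub]
    exact this
  · intro S hS hSδ
    exact setIntegral_ite_sub_ite_eq_zero hW (hε s) (hε t) hlaw (hindex s) (hindex t)
      (measurable_fst hS) fun w hw => sub_eq_zero.mp (hδ w ▸ hSδ hw)
end

section
/- In the multinomial choice model with choicewise utilities U_j = X_j'β + ε_j, if the joint distribution of (ε₁,…,ε_K) conditional on X is exchangeable with an everywhere positive joint density on ℝ^K for almost every X, then for any pair of choices s ≠ t: X_s'β > X_t'β ⟺ P(Y = s|X) > P(Y = t|X), where Y is the utility-maximizing choice. -/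
/-!
Swapping the coordinates `s` and `t` of the shock vector preserves its conditional law
(exchangeability) and maps the event "`t` is chosen" onto the event where `s` beats every
alternative after trading systematic utilities with `t`. When `X_t'β ≤ X_s'β` that event lies
inside "`s` is chosen"; when the inequality is strict the difference contains a nonempty open set,
which has positive probability because the density is positive. The conditional choice
probabilities are read off the regular conditional distribution of `ε` given `X`, which the density
hypothesis identifies with the measure of density `f (X ω)` for almost every `ω`: the hypothesis
holds set by set, and the Borel σ-algebra of `ℝ^K` is countably generated.
-/

open MeasureTheory Set

open ProbabilityTheory
open scoped ENNReal

theorem Set.Countable.generatePiSystem {α : Type*} {S : Set (Set α)} (hS : S.Countable) :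
    (generatePiSystem S).Countable := by
  refine ((countable_ofPred_finite_subset hS).image sInter).mono fun s hs => ?_
  induction hs with
  | @base s hs => exact ⟨{s}, ⟨finite_singleton s, singleton_subset_iff.2 hs⟩, sInter_singleton s⟩
  | inter _ _ _ hs ht =>
    obtain ⟨F, ⟨hF, hFS⟩, rfl⟩ := hs
    obtain ⟨G, ⟨hG, hGS⟩, rfl⟩ := ht
    exact ⟨F ∪ G, ⟨hF.union hG, union_subset hFS hGS⟩, sInter_union F G⟩

theorem ae_eq_of_forall_measurableSet_ae_eq {Ω α : Type*} [MeasurableSpace Ω] [MeasurableSpace α]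
    [MeasurableSpace.CountablyGenerated α] {μ : Measure Ω} {ν ρ : Ω → Measure α}
    [∀ ω, IsFiniteMeasure (ν ω)] (h : ∀ S, MeasurableSet S → ∀ᵐ ω ∂μ, ν ω S = ρ ω S) :
    ν =ᵐ[μ] ρ := by
  set C := generatePiSystem (MeasurableSpace.countableGeneratingSet α)
  have hC : C.Countable := MeasurableSpace.countable_countableGeneratingSet.generatePiSystem
  have hC_meas : ∀ s ∈ C, MeasurableSet s :=
    generatePiSystem_measurableSet fun _ => MeasurableSpace.measurableSet_countableGeneratingSet
  filter_upwards [(ae_ball_iff hC).2 fun s hs => h s (hC_meas s hs), h univ MeasurableSet.univ]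
    with ω hω huniv
  refine ext_of_generate_finite C ?_ (isPiSystem_generatePiSystem _) hω huniv
  rw [generateFrom_generatePiSystem_eq, MeasurableSpace.generateFrom_countableGeneratingSet]

theorem MeasureTheory.MeasurePreserving.withDensity_of_comp_eq {α : Type*} [MeasurableSpace α]
    {μ : Measure α} {φ : α → α} (hφ : MeasurePreserving φ μ μ) (hφe : MeasurableEmbedding φ)
    {g : α → ℝ≥0∞} (hg : ∀ x, g (φ x) = g x) :
    MeasurePreserving φ (μ.withDensity g) (μ.withDensity g) := by
  refine ⟨hφ.measurable, Measure.ext fun S hS => ?_⟩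
  rw [Measure.map_apply hφ.measurable hS, withDensity_apply _ (hφ.measurable hS),
    withDensity_apply _ hS, ← hφ.setLIntegral_comp_preimage_emb hφe g S]
  simp only [hg]

theorem measurePreserving_comp_perm_withDensity {ι : Type*} [Fintype ι]
    {g : (ι → ℝ) → ℝ≥0∞} (hg : ∀ (σ : Equiv.Perm ι) e, g (e ∘ σ) = g e) (σ : Equiv.Perm ι) :
    MeasurePreserving (· ∘ σ) (volume.withDensity g) (volume.withDensity g) := by
  have hΦ : ⇑(MeasurableEquiv.piCongrLeft (fun _ : ι => ℝ) σ.symm) = (· ∘ σ) := by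
    ext e j
    simp [MeasurableEquiv.piCongrLeft, Equiv.piCongrLeft_apply]
  rw [← hΦ]
  exact (volume_measurePreserving_piCongrLeft _ σ.symm).withDensity_of_comp_eq
    (MeasurableEquiv.measurableEmbedding _) fun e => by rw [hΦ]; exact hg σ e

theorem isOpenPosMeasure_withDensity {α : Type*} [TopologicalSpace α] [MeasurableSpace α]
    {μ : Measure α} [μ.IsOpenPosMeasure] {g : α → ℝ≥0∞} (hg : AEMeasurable g μ)
    (hg_pos : ∀ x, g x ≠ 0) : (μ.withDensity g).IsOpenPosMeasure := by
  refine ⟨fun U hU hne => ?_⟩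
  rw [Ne, withDensity_apply_eq_zero' hg]
  simpa [hg_pos] using hU.measure_ne_zero μ hne

section CondDensity

variable {Ω 𝓧 E : Type*} [MeasurableSpace Ω] [MeasurableSpace 𝓧] [MeasurableSpace E]
  {μ : Measure Ω} {X : Ω → 𝓧} {ε : Ω → E}

def IsCondDensity (μ : Measure Ω) (X : Ω → 𝓧) (ε : Ω → E) (ρ : Measure E)
    (f : 𝓧 → E → ℝ) : Prop :=
  ∀ S, MeasurableSet S →
    condExpGiven μ X (S.indicator 1 ∘ ε) =ᵐ[μ] fun ω => ∫ e in S, f (X ω) e ∂ρ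

variable [StandardBorelSpace E] [Nonempty E] [IsFiniteMeasure μ]

theorem condExpGiven_indicator_prodMk_ae_eq (hX : Measurable X) (hε : Measurable ε)
    {T : Set (𝓧 × E)} (hT : MeasurableSet T) :
    condExpGiven μ X (fun ω => T.indicator 1 (X ω, ε ω)) =ᵐ[μ]
      fun ω => (condDistrib ε X μ (X ω)).real (Prod.mk (X ω) ⁻¹' T) := by
  have hint : Integrable (fun ω => T.indicator (1 : 𝓧 × E → ℝ) (X ω, ε ω)) μ :=
    (integrable_const (1 : ℝ)).indicator (hT.preimage (hX.prodMk hε))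
  refine (condExp_prod_ae_eq_integral_condDistrib hX hε.aemeasurable
    (stronglyMeasurable_const.indicator hT) hint).trans (ae_of_all _ fun ω => ?_)
  exact integral_indicator_one (measurable_prodMk_left hT)

variable {ρ : Measure E} {f : 𝓧 → E → ℝ}

theorem IsCondDensity.ae_condDistrib_real_eq (hd : IsCondDensity μ X ε ρ f) (hX : Measurable X)
    (hε : Measurable ε) {S : Set E} (hS : MeasurableSet S) :
    ∀ᵐ ω ∂μ, (condDistrib ε X μ (X ω)).real S = ∫ e in S, f (X ω) e ∂ρ :=
  (condDistrib_ae_eq_condExp hX hε hS).trans (hd S hS)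

theorem IsCondDensity.ae_integrable (hd : IsCondDensity μ X ε ρ f) (hX : Measurable X)
    (hε : Measurable ε) : ∀ᵐ ω ∂μ, Integrable (f (X ω)) ρ := by
  filter_upwards [hd.ae_condDistrib_real_eq hX hε MeasurableSet.univ] with ω h
  rw [probReal_univ, setIntegral_univ] at h
  -- the Bochner integral of a non-integrable function is `0`, not `1`
  exact Integrable.of_integral_ne_zero (h ▸ one_ne_zero)

theorem IsCondDensity.condDistrib_ae_eq_withDensity (hd : IsCondDensity μ X ε ρ f)
    (hX : Measurable X) (hε : Measurable ε) (hf : ∀ x e, 0 ≤ f x e) :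
    ∀ᵐ ω ∂μ, condDistrib ε X μ (X ω) = ρ.withDensity fun e => ENNReal.ofReal (f (X ω) e) := by
  refine ae_eq_of_forall_measurableSet_ae_eq (ν := fun ω => condDistrib ε X μ (X ω))
    fun S hS => ?_
  filter_upwards [hd.ae_condDistrib_real_eq hX hε hS, hd.ae_integrable hX hε] with ω h hint
  rw [withDensity_apply _ hS, ← ofReal_integral_eq_lintegral_ofReal hint.integrableOn
    (ae_of_all _ (hf _)), ← h, ofReal_measureReal]

end CondDensity

namespace MultinomialChoice

variable {ι : Type*}

def choiceSet (c : ι → ℝ) (k : ι) : Set (ι → ℝ) :=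
  {e | ∀ j, j ≠ k → c j + e j < c k + e k}

theorem eq_of_mem_choiceSet {c e : ι → ℝ} {k l : ι} (hk : e ∈ choiceSet c k)
    (hl : e ∈ choiceSet c l) : k = l := by
  by_contra hkl
  exact (hk l (Ne.symm hkl)).not_gt (hl k hkl)

theorem isOpen_setOf_mem_choiceSet [Finite ι] (k : ι) :
    IsOpen {p : (ι → ℝ) × (ι → ℝ) | p.2 ∈ choiceSet p.1 k} := by
  change IsOpen {p : (ι → ℝ) × (ι → ℝ) | ∀ j, j ≠ k → p.1 j + p.2 j < p.1 k + p.2 k}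
  simp only [ofPred_forall]
  exact isOpen_iInter_of_finite fun j => isOpen_iInter_of_finite fun _ =>
    isOpen_lt (by fun_prop) (by fun_prop)

theorem isOpen_choiceSet [Finite ι] (c : ι → ℝ) (k : ι) : IsOpen (choiceSet c k) :=
  (isOpen_setOf_mem_choiceSet k).preimage (Continuous.prodMk_right c)

theorem preimage_comp_perm_choiceSet (σ : Equiv.Perm ι) (c : ι → ℝ) (k : ι) :
    (· ∘ σ) ⁻¹' choiceSet c k = choiceSet (c ∘ σ.symm) (σ k) := by
  ext e
  refine σ.forall_congr fun {j} => ?_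
  simp

section RankOrdering

variable [DecidableEq ι]

theorem choiceSet_comp_swap_subset {c : ι → ℝ} {s t : ι} (hc : c t ≤ c s) :
    choiceSet (c ∘ Equiv.swap s t) s ⊆ choiceSet c s := by
  intro e he j hjs
  simp only [choiceSet, mem_ofPred_eq, Function.comp_apply, Equiv.swap_apply_left] at he
  rcases eq_or_ne j t with rfl | hjt
  · have := he j hjs
    rw [Equiv.swap_apply_right] at this
    linarith
  · have := he j hjs
    rw [Equiv.swap_apply_of_ne_of_ne hjs hjt] at this
    linarith

variable [Finite ι] {ν : Measure (ι → ℝ)}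

theorem measure_choiceSet_eq_comp_swap (hν : ∀ σ : Equiv.Perm ι, MeasurePreserving (· ∘ σ) ν ν)
    (c : ι → ℝ) (s t : ι) : ν (choiceSet c t) = ν (choiceSet (c ∘ Equiv.swap s t) s) := by
  rw [← (hν (Equiv.swap s t)).measure_preimage (isOpen_choiceSet c t).nullMeasurableSet,
    preimage_comp_perm_choiceSet, Equiv.symm_swap, Equiv.swap_apply_right]

variable {c : ι → ℝ} {s t : ι}

theorem measure_choiceSet_le_of_le (hν : ∀ σ : Equiv.Perm ι, MeasurePreserving (· ∘ σ) ν ν)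
    (hc : c t ≤ c s) : ν (choiceSet c t) ≤ ν (choiceSet c s) :=
  (measure_choiceSet_eq_comp_swap hν c s t).trans_le (measure_mono (choiceSet_comp_swap_subset hc))

theorem measure_choiceSet_lt_of_lt [IsFiniteMeasure ν] [ν.IsOpenPosMeasure]
    (hν : ∀ σ : Equiv.Perm ι, MeasurePreserving (· ∘ σ) ν ν) (hc : c t < c s) :
    ν (choiceSet c t) < ν (choiceSet c s) := by
  have hts : t ≠ s := ne_of_apply_ne c hc.ne
  set U := choiceSet c s ∩ {e | c t + e s < c s + e t}
  have hU_open : IsOpen U :=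
    (isOpen_choiceSet c s).inter (isOpen_lt (by fun_prop) (by fun_prop))
  have hU_ne : U.Nonempty := by
    -- every utility `c j + e j` vanishes except that of `s`, which is `c s - c t > 0`
    refine ⟨fun j => (if j = s then c s - c t else 0) - c j, fun j hjs => ?_, ?_⟩
    · simp [hjs, hc]
    · simp [hts, hc]
  have hU_disj : Disjoint (choiceSet (c ∘ Equiv.swap s t) s) U := by
    refine disjoint_left.2 fun e he hU => ?_
    have := he t hts
    simp only [Function.comp_apply, Equiv.swap_apply_left, Equiv.swap_apply_right] at this
    exact this.not_gt hU.2
  calc ν (choiceSet c t) = ν (choiceSet (c ∘ Equiv.swap s t) s) :=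
        measure_choiceSet_eq_comp_swap hν c s t
    _ < ν (choiceSet (c ∘ Equiv.swap s t) s) + ν U :=
        ENNReal.lt_add_right (measure_ne_top _ _) (hU_open.measure_ne_zero ν hU_ne)
    _ = ν (choiceSet (c ∘ Equiv.swap s t) s ∪ U) :=
        (measure_union hU_disj hU_open.measurableSet).symm
    _ ≤ ν (choiceSet c s) :=
        measure_mono (union_subset (choiceSet_comp_swap_subset hc.le) inter_subset_left)

theorem measure_choiceSet_lt_iff [IsFiniteMeasure ν] [ν.IsOpenPosMeasure]
    (hν : ∀ σ : Equiv.Perm ι, MeasurePreserving (· ∘ σ) ν ν) :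
    ν (choiceSet c t) < ν (choiceSet c s) ↔ c t < c s :=
  ⟨fun h => not_le.1 fun hc => (measure_choiceSet_le_of_le hν hc).not_gt h,
    measure_choiceSet_lt_of_lt hν⟩

end RankOrdering

theorem condExpGiven_choice_ae_eq {Ω 𝓧 : Type*} [MeasurableSpace Ω] [MeasurableSpace 𝓧]
    [Finite ι] [DecidableEq ι] {μ : Measure Ω} [IsFiniteMeasure μ] {X : Ω → 𝓧} {ε : Ω → ι → ℝ}
    (hX : Measurable X) (hε : Measurable ε) {u : 𝓧 → ι → ℝ} (hu : Measurable u) {Y : Ω → ι}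
    (hY : ∀ᵐ ω ∂μ, ε ω ∈ choiceSet (u (X ω)) (Y ω)) (k : ι) :
    condExpGiven μ X (fun ω => if Y ω = k then 1 else 0) =ᵐ[μ]
      fun ω => (condDistrib ε X μ (X ω)).real (choiceSet (u (X ω)) k) := by
  have hT : MeasurableSet {p : 𝓧 × (ι → ℝ) | p.2 ∈ choiceSet (u p.1) k} :=
    (isOpen_setOf_mem_choiceSet k).measurableSet.preimage
      ((hu.comp measurable_fst).prodMk measurable_snd)
  refine (condExp_congr_ae ?_).trans (condExpGiven_indicator_prodMk_ae_eq hX hε hT)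
  classical
  filter_upwards [hY] with ω hω
  rw [indicator_apply]
  exact if_congr ⟨fun h => h ▸ hω, eq_of_mem_choiceSet hω⟩ rfl rfl

end MultinomialChoice

open MultinomialChoice

/-- In the multinomial choice model with utilities `U_j = X_j'β + ε_j`, if the
joint distribution of `(ε₁,…,ε_K)` conditional on `X` is exchangeable with an everywhere
positive joint density on `ℝ^K`, then for any pair of choices `s ≠ t`:
`X_s'β > X_t'β ⟺ P(Y = s|X) > P(Y = t|X)` almost surely, where `Y` maximizes utility. -/
theorem multinomial_rank_ordering {q K : ℕ} {Ω : Type*} [MeasurableSpace Ω]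
    (μ : Measure Ω) [IsProbabilityMeasure μ]
    (X : Ω → Fin K → Fin q → ℝ) (hX : Measurable X)
    (ε : Ω → Fin K → ℝ) (hε : Measurable ε)
    (β : Fin q → ℝ)
    -- `f x` is the joint density of `ε` conditional on `X = x`
    (f : (Fin K → Fin q → ℝ) → (Fin K → ℝ) → ℝ)
    -- everywhere positive
    (hfpos : ∀ x e, 0 < f x e)
    -- exchangeable
    (hexch : ∀ x (σ : Equiv.Perm (Fin K)) (e : Fin K → ℝ), f x (e ∘ σ) = f x e)
    -- conditional density identity: P(ε ∈ S | X) = ∫_S f(X, e) de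
    (hdens : ∀ S : Set (Fin K → ℝ), MeasurableSet S →
      condExpGiven μ X (S.indicator 1 ∘ ε)
        =ᵐ[μ] fun ω => ∫ e in S, f (X ω) e)
    -- `Y` is the utility-maximizing choice: U_k > U_j for all j ≠ Y
    (Y : Ω → Fin K)
    (hYmax : ∀ᵐ ω ∂μ, ∀ j : Fin K, j ≠ Y ω →
      (∑ i, X ω j i * β i) + ε ω j < (∑ i, X ω (Y ω) i * β i) + ε ω (Y ω)) :
    ∀ s t : Fin K, s ≠ t →
      ∀ᵐ ω ∂μ,
        ((∑ i, X ω t i * β i) < ∑ i, X ω s i * β i ↔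
          condExpGiven μ X (fun ω' => if Y ω' = t then 1 else 0) ω <
            condExpGiven μ X (fun ω' => if Y ω' = s then 1 else 0) ω) := by
  intro s t _
  let u : (Fin K → Fin q → ℝ) → Fin K → ℝ := fun x j => ∑ i, x j i * β i
  have hu : Measurable u := by fun_prop
  have hd : IsCondDensity μ X ε volume f := hdens
  filter_upwards [hd.condDistrib_ae_eq_withDensity hX hε fun x e => (hfpos x e).le,
    hd.ae_integrable hX hε, condExpGiven_choice_ae_eq hX hε hu hYmax s,
    condExpGiven_choice_ae_eq hX hε hu hYmax t] with ω hκ hint hs ht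
  have := isFiniteMeasure_withDensity_ofReal hint.2
  have := isOpenPosMeasure_withDensity hint.aemeasurable.ennreal_ofReal
    fun e => ENNReal.ofReal_ne_zero_iff.2 (hfpos (X ω) e)
  have hperm := measurePreserving_comp_perm_withDensity
    (g := fun e => ENNReal.ofReal (f (X ω) e)) fun σ e => by rw [hexch]
  rw [hs, ht, hκ, measureReal_def, measureReal_def,
    ENNReal.toReal_lt_toReal (measure_ne_top _ _) (measure_ne_top _ _)]
  exact (measure_choiceSet_lt_iff (c := u (X ω)) hperm).symm
end

section
/- In the Monte Carlo design where X̃ = (X₂,…,X_d) are i.i.d. U(−1,1), X₁ = sgn(X₂)·U with U ~ U(0,1) independent of X̃, and β = (1,0,…,0), the identified set Θ = {b ∈ Γ : (X'b)(X'β) ≥ 0 a.s.} equals {b ∈ Γ : b₂ ≥ 0 and b_k = 0 for k ∈ {3,…,d}}, where Γ = {b ∈ ℝ^d : b₁ = 1, (b₂,…,b_d) ∈ [−1,1]^{d−1}}. -/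
/-!
On the event `X₂ > 0` we have `X₁ = U`, so there the regressor vector is the vector
`Z = (U, X₂, …, X_d)` of independent uniform coordinates, whose joint law charges every open
subset of the box `(0,1)² × (-1,1)^{d-2}`. Hence `(X'b) X₁ ≥ 0` a.s. forces the linear form
`z ↦ ∑ zᵢ bᵢ` to be nonnegative on that box, and by continuity on its closure; evaluating at
`e₂` and `±e_k` gives `b₂ ≥ 0` and `b_k = 0`. Conversely, for such `b`,
`(X'b) X₁ = X₁² + b₂ |X₂| U ≥ 0` because `U > 0` a.s.
-/

open MeasureTheory ProbabilityTheory Set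

lemma Ioo_subset_support_uniformOnIoo (a b : ℝ) : Ioo a b ⊆ (uniformOnIoo a b).support :=
  fun _ hx => (Measure.absolutelyContinuous_smul (by simp)).support_mono <|
    Measure.interior_inter_support ⟨by rwa [interior_Ioo], by simp [Measure.support_eq_univ]⟩

lemma ae_mem_Ioo_uniformOnIoo (a b : ℝ) : ∀ᵐ x ∂uniformOnIoo a b, x ∈ Ioo a b :=
  Measure.ae_smul_measure (ae_restrict_mem measurableSet_Ioo) _

theorem ProbabilityTheory.iIndepFun.pi_support_subset_support_map {Ω ι : Type*} [Fintype ι]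
    {E : ι → Type*} [∀ i, TopologicalSpace (E i)] [∀ i, MeasurableSpace (E i)]
    [∀ i, OpensMeasurableSpace (E i)] [MeasurableSpace Ω] {μ : Measure Ω}
    {Z : ∀ i, Ω → E i} (hZ : ∀ i, Measurable (Z i)) (hind : iIndepFun Z μ) :
    univ.pi (fun i => (μ.map (Z i)).support) ⊆ (μ.map fun ω i => Z i ω).support := by
  intro z hz
  rw [Measure.mem_support_iff_forall]
  intro V hV
  rw [nhds_pi, Filter.mem_pi'] at hV
  obtain ⟨I, t, ht, htV⟩ := hV
  have hbox : (fun ω i => Z i ω) ⁻¹' univ.pi (fun i => interior (t i)) ⊆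
      (fun ω i => Z i ω) ⁻¹' V :=
    fun ω hω => htV fun i _ => interior_subset (hω i (mem_univ i))
  have hfactor : ∀ i, μ (Z i ⁻¹' interior (t i)) ≠ 0 := fun i => by
    rw [← Measure.map_apply (hZ i) isOpen_interior.measurableSet]
    exact ((Measure.mem_support_iff_forall _).1 (hz i (mem_univ i)) _
      (interior_mem_nhds.2 (ht i))).ne'
  calc 0 < ∏ i, μ (Z i ⁻¹' interior (t i)) :=
        pos_iff_ne_zero.2 (Finset.prod_ne_zero_iff.2 fun i _ => hfactor i)
    _ = μ (⋂ i ∈ Finset.univ, Z i ⁻¹' interior (t i)) :=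
        (hind.measure_inter_preimage_eq_mul _ fun i _ => isOpen_interior.measurableSet).symm
    _ = μ ((fun ω i => Z i ω) ⁻¹' univ.pi (fun i => interior (t i))) := by
        congr 1; ext ω; simp
    _ ≤ μ ((fun ω i => Z i ω) ⁻¹' V) := measure_mono hbox
    _ ≤ μ.map (fun ω i => Z i ω) V :=
        Measure.le_map_apply (measurable_pi_lambda _ hZ).aemeasurable V

theorem nonneg_of_ae_nonneg_of_mem_support {Ω X : Type*} [MeasurableSpace Ω]
    [TopologicalSpace X] [MeasurableSpace X] [OpensMeasurableSpace X] {μ : Measure Ω}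
    {Y : Ω → X} (hY : AEMeasurable Y μ) {s : Set X} (hs : IsOpen s) {f : X → ℝ}
    (hf : Continuous f) (h : ∀ᵐ ω ∂μ, Y ω ∈ s → 0 ≤ f (Y ω)) {x : X} (hxs : x ∈ s)
    (hx : x ∈ (μ.map Y).support) : 0 ≤ f x := by
  by_contra! hneg
  have hopen : IsOpen (s ∩ f ⁻¹' Iio 0) := hs.inter (isOpen_lt hf continuous_const)
  have hnull : μ.map Y (s ∩ f ⁻¹' Iio 0) = 0 := by
    rw [Measure.map_apply_of_aemeasurable hY hopen.measurableSet]
    exact measure_mono_null (fun ω hω => not_le.2 hω.2 ∘ (· hω.1)) (ae_iff.1 h)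
  exact ((Measure.mem_support_iff_forall x).1 hx _ (hopen.mem_nhds ⟨hxs, hneg⟩)).ne' hnull

lemma Fin.val_one_of_two_le {d : ℕ} [NeZero d] (hd : 2 ≤ d) : ((1 : Fin d) : ℕ) = 1 := by
  rw [Fin.val_one', Nat.mod_eq_of_lt hd]

lemma sum_mul_eq_add_of_eq_zero {d : ℕ} [NeZero d] (hd : 2 ≤ d) (x b : Fin d → ℝ)
    (hb0 : b 0 = 1) (hbk : ∀ k : Fin d, 2 ≤ (k : ℕ) → b k = 0) :
    ∑ i, x i * b i = x 0 + x 1 * b 1 := by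
  have h1 := Fin.val_one_of_two_le hd
  have h01 : (0 : Fin d) ≠ 1 := Fin.ne_of_val_ne (by rw [h1, Fin.val_zero]; norm_num)
  rw [Fintype.sum_eq_add 0 1 h01 fun k hk => ?_, hb0, mul_one]
  rw [hbk k ?_, mul_zero]
  simp only [ne_eq, Fin.ext_iff, Fin.val_zero, h1] at hk
  omega

lemma nonneg_on_Icc_pi_of_nonneg_on_Ioo_pi {ι : Type*} [Fintype ι] {f : (ι → ℝ) → ℝ}
    (hf : Continuous f) {a c : ι → ℝ} (hac : ∀ i, a i < c i)
    (h : ∀ z ∈ univ.pi (fun i => Ioo (a i) (c i)), 0 ≤ f z) :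
    ∀ z ∈ univ.pi (fun i => Icc (a i) (c i)), 0 ≤ f z := by
  have := closure_minimal (t := {z | 0 ≤ f z}) h (isClosed_le continuous_const hf)
  simp only [closure_pi_set, closure_Ioo (hac _).ne] at this
  exact fun z hz => this hz

def upperBox (d : ℕ) : Set (Fin d → ℝ) :=
  univ.pi fun i => Ioo (if (i : ℕ) < 2 then 0 else -1) 1

lemma isOpen_upperBox (d : ℕ) : IsOpen (upperBox d) :=
  isOpen_set_pi finite_univ fun _ _ => isOpen_Ioo

lemma pos_of_mem_upperBox {d : ℕ} [NeZero d] {z : Fin d → ℝ} (hz : z ∈ upperBox d) :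
    0 < z 0 ∧ 0 < z 1 :=
  ⟨by simpa using (hz 0 trivial).1, by simpa [Nat.mod_le] using (hz 1 trivial).1⟩

lemma coeffs_of_sum_mul_nonneg {d : ℕ} [NeZero d] {b : Fin d → ℝ}
    (h : ∀ z ∈ upperBox d, 0 ≤ ∑ i, z i * b i) :
    0 ≤ b 1 ∧ ∀ k : Fin d, 2 ≤ (k : ℕ) → b k = 0 := by
  have hlo : ∀ i : Fin d, (if (i : ℕ) < 2 then 0 else -1 : ℝ) ≤ 0 := fun i => by
    split_ifs <;> norm_num
  have hclosed := nonneg_on_Icc_pi_of_nonneg_on_Ioo_pi (by fun_prop)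
    (fun i => (hlo i).trans_lt one_pos) h
  have hsingle : ∀ (k : Fin d) (t : ℝ), t ∈ Icc (if (k : ℕ) < 2 then 0 else -1 : ℝ) 1 →
      0 ≤ t * b k := fun k t ht => by
    simpa [Pi.single_apply] using hclosed (Pi.single k t) fun i _ => by
      rcases eq_or_ne i k with rfl | hik
      · simpa using ht
      · simpa [hik] using hlo i
  refine ⟨by simpa using hsingle 1 1 ⟨(hlo 1).trans zero_le_one, le_rfl⟩, fun k hk => ?_⟩
  have hk2 : ¬ (k : ℕ) < 2 := by omega
  have := hsingle k 1 (by simp [hk2])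
  have := hsingle k (-1) (by simp [hk2])
  linarith

lemma upperBox_subset_support_map {d : ℕ} [NeZero d] {Ω : Type*} [MeasurableSpace Ω]
    {μ : Measure Ω} {Z : Fin d → Ω → ℝ} (hZ : ∀ i, Measurable (Z i)) (hind : iIndepFun Z μ)
    (hlaw0 : μ.map (Z 0) = uniformOnIoo 0 1)
    (hlaw : ∀ k : Fin d, k ≠ 0 → μ.map (Z k) = uniformOnIoo (-1) 1) :
    upperBox d ⊆ (μ.map fun ω i => Z i ω).support := by
  refine Subset.trans (pi_mono fun i _ => ?_) (hind.pi_support_subset_support_map hZ)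
  rcases eq_or_ne i 0 with rfl | hi
  · simpa [hlaw0] using Ioo_subset_support_uniformOnIoo 0 1
  · rw [hlaw i hi]
    exact (Ioo_subset_Ioo (by split_ifs <;> norm_num) le_rfl).trans
      (Ioo_subset_support_uniformOnIoo _ _)

/-- Coordinates are indexed from `0`: `b 0` is the paper's `b₁` and `X ω 1` is `X₂`. -/
theorem monte_carlo_identified_set_general {d : ℕ} [NeZero d] (hd : 3 ≤ d)
    {Ω : Type*} [MeasurableSpace Ω]
    (μ : Measure Ω)
    (X : Ω → Fin d → ℝ) (hX : Measurable X)
    (U : Ω → ℝ) (hU : Measurable U)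
    -- laws: U ~ U(0,1) and X_k ~ U(−1,1) for k ≥ 2
    (hlawU : μ.map U = uniformOnIoo 0 1)
    (hlawX : ∀ k : Fin d, k ≠ 0 → μ.map (fun ω => X ω k) = uniformOnIoo (-1) 1)
    -- U and (X₂,…,X_d) are mutually independent
    (Z : Fin d → Ω → ℝ)
    (hZ0 : Z 0 = U) (hZk : ∀ k : Fin d, k ≠ 0 → Z k = fun ω => X ω k)
    (hindep : iIndepFun Z μ)
    -- X₁ = sgn(X₂)·U
    (hX1 : ∀ ω, X ω 0 = Real.sign (X ω 1) * U ω) :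
    {b : Fin d → ℝ |
        (b 0 = 1 ∧ ∀ k : Fin d, k ≠ 0 → b k ∈ Icc (-1:ℝ) 1) ∧
        ∀ᵐ ω ∂μ, (∑ i, X ω i * b i) * X ω 0 ≥ 0} =
    {b : Fin d → ℝ |
        (b 0 = 1 ∧ ∀ k : Fin d, k ≠ 0 → b k ∈ Icc (-1:ℝ) 1) ∧
        0 ≤ b 1 ∧ ∀ k : Fin d, 2 ≤ (k : ℕ) → b k = 0} := by
  have h1 : ((1 : Fin d) : ℕ) = 1 := Fin.val_one_of_two_le (by omega)
  have h10 : (1 : Fin d) ≠ 0 := Fin.ne_of_val_ne (by rw [h1, Fin.val_zero]; norm_num)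
  have hZ : ∀ i, Measurable (Z i) := fun i => by
    rcases eq_or_ne i 0 with rfl | hi
    · exact hZ0 ▸ hU
    · exact hZk i hi ▸ hX.eval
  have hXZ : ∀ ω, 0 < Z 1 ω → X ω = fun i => Z i ω := fun ω hω => funext fun i => by
    rcases eq_or_ne i 0 with rfl | hi
    · have hX1Z : X ω 1 = Z 1 ω := by rw [hZk 1 h10]
      rw [hX1, hX1Z, Real.sign_of_pos hω, one_mul, hZ0]
    · rw [hZk i hi]
  ext b
  constructor
  · rintro ⟨hΓ, hae⟩
    refine ⟨hΓ, coeffs_of_sum_mul_nonneg fun z hz => ?_⟩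
    have hsupp := upperBox_subset_support_map hZ hindep (hZ0 ▸ hlawU)
      fun k hk => hZk k hk ▸ hlawX k hk
    refine nonneg_of_ae_nonneg_of_mem_support (f := fun z => ∑ i, z i * b i)
      (measurable_pi_lambda _ hZ).aemeasurable (isOpen_upperBox d) (by fun_prop) ?_ hz (hsupp hz)
    filter_upwards [hae] with ω hω hωbox
    rw [hXZ ω (pos_of_mem_upperBox hωbox).2] at hω
    exact nonneg_of_mul_nonneg_left hω (pos_of_mem_upperBox hωbox).1
  · rintro ⟨hΓ, hb1, hbk⟩
    refine ⟨hΓ, ?_⟩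
    filter_upwards [ae_of_ae_map hU.aemeasurable (hlawU ▸ ae_mem_Ioo_uniformOnIoo 0 1)]
      with ω hω
    rw [sum_mul_eq_add_of_eq_zero (by omega) _ _ hΓ.1 hbk, hX1 ω]
    have := mul_nonneg (mul_nonneg hb1 (Real.sign_mul_nonneg (X ω 1))) hω.1.le
    nlinarith [sq_nonneg (Real.sign (X ω 1) * U ω)]

/-- In the Monte Carlo design where `X₂,…,X_d` are i.i.d. `U(−1,1)`,
`X₁ = sgn(X₂)·U` with `U ~ U(0,1)` independent of `(X₂,…,X_d)`, and `β = (1,0,…,0)`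
(so `X'β = X₁`), the identified set `Θ = {b ∈ Γ : (X'b)(X'β) ≥ 0 a.s.}` equals
`{b ∈ Γ : b₂ ≥ 0 and b_k = 0 for k ∈ {3,…,d}}`, where
`Γ = {b ∈ ℝ^d : b₁ = 1, (b₂,…,b_d) ∈ [−1,1]^{d−1}}`.
(Coordinates are indexed by `Fin d`, so `b 0` is `b₁`, `b 1` is `b₂`, etc.) -/
theorem monte_carlo_identified_set {d : ℕ} [NeZero d] (hd : 3 ≤ d)
    {Ω : Type*} [MeasurableSpace Ω]
    (μ : Measure Ω) [IsProbabilityMeasure μ]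
    (X : Ω → Fin d → ℝ) (hX : Measurable X)
    (U : Ω → ℝ) (hU : Measurable U)
    -- laws: U ~ U(0,1) and X_k ~ U(−1,1) for k ≥ 2
    (hlawU : μ.map U = uniformOnIoo 0 1)
    (hlawX : ∀ k : Fin d, k ≠ 0 → μ.map (fun ω => X ω k) = uniformOnIoo (-1) 1)
    -- U and (X₂,…,X_d) are mutually independent
    (Z : Fin d → Ω → ℝ)
    (hZ0 : Z 0 = U) (hZk : ∀ k : Fin d, k ≠ 0 → Z k = fun ω => X ω k)
    (hindep : iIndepFun Z μ)
    -- X₁ = sgn(X₂)·U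
    (hX1 : ∀ ω, X ω 0 = Real.sign (X ω 1) * U ω) :
    {b : Fin d → ℝ |
        (b 0 = 1 ∧ ∀ k : Fin d, k ≠ 0 → b k ∈ Icc (-1:ℝ) 1) ∧
        ∀ᵐ ω ∂μ, (∑ i, X ω i * b i) * X ω 0 ≥ 0} =
    {b : Fin d → ℝ |
        (b 0 = 1 ∧ ∀ k : Fin d, k ≠ 0 → b k ∈ Icc (-1:ℝ) 1) ∧
        0 ≤ b 1 ∧ ∀ k : Fin d, 2 ≤ (k : ℕ) → b k = 0} :=
  monte_carlo_identified_set_general hd μ X hX U hU hlawU hlawX Z hZ0 hZk hindep hX1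
end

section
/- Sign preservation under conditional expectation: let W be an integrable random variable and Z a random variable (or vector) measurable with respect to σ(X), such that sgn(Z) = sgn(E(W|X)) almost surely and P(Z = 0) = 0. Then for any sub-σ-algebra 𝒢 of σ(X) with respect to which Z is measurable, sgn(Z) = sgn(E(W|𝒢)) need not hold in general, but Z·E(W|𝒢) ≥ 0 almost surely; i.e., Z·E(E(W|X)|𝒢) ≥ 0 a.s. -/
open MeasureTheory

/-- sign preservation under conditional expectation: let `W` be integrable,
`σ(X)` a sub-σ-algebra `mX` of the ambient σ-algebra, `Z` measurable w.r.t. a further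
sub-σ-algebra `𝒢 ⊆ mX`, with `P(Z = 0) = 0` and `Z·E(W|mX) ≥ 0` a.s. (sign agreement).
Then `Z·E(W|𝒢) ≥ 0` a.s., i.e. `Z·E(E(W|mX)|𝒢) ≥ 0` a.s. -/
theorem sign_preservation_condexp {Ω : Type*} {m0 : MeasurableSpace Ω}
    (μ : Measure Ω) [IsProbabilityMeasure μ]
    (mX 𝒢 : MeasurableSpace Ω) (h𝒢 : 𝒢 ≤ mX) (hmX : mX ≤ m0)
    (W : Ω → ℝ) (hWint : Integrable W μ)
    (Z : Ω → ℝ) (hZmeas : Measurable[𝒢] Z)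
    (hZ0 : μ {ω | Z ω = 0} = 0)
    (hsign : ∀ᵐ ω ∂μ, Z ω * (μ[W | mX]) ω ≥ 0) :
    (∀ᵐ ω ∂μ, Z ω * (μ[W | 𝒢]) ω ≥ 0) ∧
    (∀ᵐ ω ∂μ, Z ω * (μ[(μ[W | mX]) | 𝒢]) ω ≥ 0) := by
  set Y : Ω → ℝ := μ[W | mX] with hY
  have hYint : Integrable Y μ := integrable_condExp
  -- sign function of Z
  set s : Ω → ℝ := fun ω => if 0 < Z ω then (1 : ℝ) else -1 with hs
  have hsmeas : Measurable[𝒢] s :=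
    Measurable.ite (hZmeas measurableSet_Ioi) measurable_const measurable_const
  have hZne : ∀ᵐ ω ∂μ, Z ω ≠ 0 := by
    rw [ae_iff]
    simpa using hZ0
  have hsY : ∀ᵐ ω ∂μ, 0 ≤ s ω * Y ω := by
    filter_upwards [hsign, hZne] with ω hωs hωne
    by_cases hpos : 0 < Z ω
    · have : 0 ≤ Y ω := nonneg_of_mul_nonneg_right hωs hpos
      simp [hs, hpos, this]
    · have hneg : Z ω < 0 := lt_of_le_of_ne (not_lt.mp hpos) hωne
      have hYle : Y ω ≤ 0 := by
        by_contra h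
        push_neg at h
        nlinarith
      simp only [hs, hpos, if_false]
      nlinarith
  have hsYint : Integrable (s * Y) μ := by
    apply hYint.bdd_mul (c := 1)
    · exact ((hsmeas.mono (h𝒢.trans hmX) le_rfl).aestronglyMeasurable)
    · refine Filter.Eventually.of_forall fun ω => ?_
      by_cases h : 0 < Z ω <;> simp [hs, h]
  have hpull : μ[s * Y | 𝒢] =ᵐ[μ] s * μ[Y | 𝒢] :=
    condExp_mul_of_stronglyMeasurable_left hsmeas.stronglyMeasurable hsYint hYint
  have hnn : 0 ≤ᵐ[μ] μ[s * Y | 𝒢] := condExp_nonneg hsY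
  have htower : μ[Y | 𝒢] =ᵐ[μ] μ[W | 𝒢] := condExp_condExp_of_le h𝒢 hmX
  have key : ∀ᵐ ω ∂μ, Z ω * (μ[Y | 𝒢]) ω ≥ 0 := by
    filter_upwards [hpull, hnn, hZne] with ω h1 h2 hne
    have h3 : 0 ≤ s ω * (μ[Y | 𝒢]) ω := by
      have := h2
      rw [h1] at this
      simpa using this
    by_cases hpos : 0 < Z ω
    · simp only [hs, hpos, if_true, one_mul] at h3
      positivity
    · have hneg : Z ω < 0 := lt_of_le_of_ne (not_lt.mp hpos) hne
      simp only [hs, hpos, if_false] at h3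
      nlinarith
  constructor
  · filter_upwards [key, htower] with ω h1 h2
    rw [← h2]; exact h1
  · exact key
end
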